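/- Suppose f is a transduction that is invariant under permutations and without data peeking, u1, u2 are data words with u1 ≡_f u2, ifl_f(u1) = d_1^m d_1^{m−1} ⋯ d_1^1 and ifl_f(u2) = d_2^m d_2^{m−1} ⋯ d_2^1, d_1^0 is a data value that is not f-influencing in u1, d_2^0 is a data value that is not f-influencing in u2, and σ ∈ Σ. Then for all i, j ∈ [0,m]: d_1^i is f-memorable (resp. f-vulnerable) in u1·(σ,d_1^j) if and only if d_2^i is f-memorable (resp. f-vulnerable) in u2·(σ,d_2^j). -/

import Mathlib

namespace SSRT

/-- Elements of a factored output: either a retained output triple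
(letter, data value, origin — integer origins allow shifting by `z`),
or one of the placeholder marks `(*,*,left)`, `(*,*,middle)`, `(*,*,right)`. -/
inductive FOElem (G D : Type) where
  | tri (g : G) (d : D) (o : ℤ)
  | left
  | middle
  | right
  deriving DecidableEq

namespace FOElem

def isTri {G D : Type} : FOElem G D → Bool
  | .tri _ _ _ => true
  | _ => false

def isMark {G D : Type} (e : FOElem G D) : Bool := !e.isTri

end FOElem

/-- Data words over the input alphabet `A` with data from `D`. -/
abbrev DataWord (A D : Type) := List (A × D)

/-- Data words with origin information over the output alphabet `G`;
positions of the input are numbered 1,…,n. -/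
abbrev OutWord (G D : Type) := List (G × D × ℕ)

/-- A transduction. -/
abbrev Transduction (A G D : Type) := DataWord A D → OutWord G D

variable {A G D : Type}

/-- Apply a permutation of data values to a data word. -/
def permW (π : Equiv.Perm D) (u : DataWord A D) : DataWord A D :=
  u.map fun p => (p.1, π p.2)

/-- Apply a permutation of data values to an output word. -/
def permOut (π : Equiv.Perm D) (w : OutWord G D) : OutWord G D :=
  w.map fun t => (t.1, π t.2.1, t.2.2)

/-- Apply a permutation of data values to a factored output
(placeholder marks are unchanged). -/
def permFO (π : Equiv.Perm D) : List (FOElem G D) → List (FOElem G D) :=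
  List.map fun e => match e with
    | .tri g d o => .tri g (π d) o
    | .left => .left
    | .middle => .middle
    | .right => .right

/-- Shift the origin of every retained triple by `z`. -/
def foShift (z : ℤ) : List (FOElem G D) → List (FOElem G D) :=
  List.map fun e => match e with
    | .tri g d o => .tri g d (o + z)
    | .left => .left
    | .middle => .middle
    | .right => .right

/-- `f` is invariant under permutations. -/
def PermInvariant (f : Transduction A G D) : Prop :=
  ∀ (π : Equiv.Perm D) (u : DataWord A D), f (permW π u) = permOut π (f u)

/-- `f` is without data peeking: every data value output from origin `o`
already occurs in the input at some position `≤ o`. -/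
def NoDataPeeking (f : Transduction A G D) : Prop :=
  ∀ (w : DataWord A D) (t : G × D × ℕ), t ∈ f w →
    ∃ (i : ℕ) (a : A), w[i]? = some (a, t.2.1) ∧ i + 1 ≤ t.2.2

/-- `f` has linear blow up. -/
def LinearBlowUp (f : Transduction A G D) : Prop :=
  ∃ K : ℕ, ∀ (w : DataWord A D) (o : ℕ), 1 ≤ o → o ≤ w.length →
    ((f w).filter fun t => t.2.2 == o).length ≤ K

variable [DecidableEq G] [DecidableEq D]

/-- Merge consecutive occurrences of equal placeholder marks into one. -/
def collapse : List (FOElem G D) → List (FOElem G D)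
  | [] => []
  | [a] => [a]
  | a :: b :: rest =>
      if a = b ∧ a.isMark then collapse (b :: rest)
      else a :: collapse (b :: rest)

/-- The factored output `f(u̲ ∣ v)`. -/
def leftFac (f : Transduction A G D) (u v : DataWord A D) : List (FOElem G D) :=
  collapse ((f (u ++ v)).map fun t =>
    if t.2.2 ≤ u.length then FOElem.left else FOElem.tri t.1 t.2.1 (t.2.2 : ℤ))

/-- The factored output `f(u ∣ v̲)`. -/
def rightFac (f : Transduction A G D) (u v : DataWord A D) : List (FOElem G D) :=
  collapse ((f (u ++ v)).map fun t =>
    if u.length < t.2.2 then FOElem.right else FOElem.tri t.1 t.2.1 (t.2.2 : ℤ))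

/-- The factored output `f(u̲ ∣ v ∣ w̲)`. -/
def threeFac (f : Transduction A G D) (u v w : DataWord A D) : List (FOElem G D) :=
  collapse ((f (u ++ v ++ w)).map fun t =>
    if t.2.2 ≤ u.length then FOElem.left
    else if t.2.2 ≤ u.length + v.length then FOElem.tri t.1 t.2.1 (t.2.2 : ℤ)
    else FOElem.right)

/-- The factored output `f(u̲ ∣ v̲ ∣ w̲)`. -/
def allFac (f : Transduction A G D) (u v w : DataWord A D) : List (FOElem G D) :=
  collapse ((f (u ++ v ++ w)).map fun t =>
    if t.2.2 ≤ u.length then FOElem.left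
    else if t.2.2 ≤ u.length + v.length then FOElem.middle
    else FOElem.right)

/-- `u[d/d']`: replace every occurrence of the data value `d` by `d'`. -/
def replaceD (u : DataWord A D) (d d' : D) : DataWord A D :=
  u.map fun p => (p.1, if p.2 = d then d' else p.2)

/-- Isomorphism of data words: same length, same letters, and the same
equalities among the data values at the various positions. -/
def Iso (u u' : DataWord A D) : Prop :=
  u.length = u'.length ∧
  (∀ i : ℕ, u[i]?.map Prod.fst = u'[i]?.map Prod.fst) ∧
  (∀ i j : ℕ, (u[i]?.map Prod.snd = u[j]?.map Prod.snd) ↔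
          (u'[i]?.map Prod.snd = u'[j]?.map Prod.snd))

/-- `d'` is a safe replacement for `d` in `u`. -/
def SafeRepl (d d' : D) (u : DataWord A D) : Prop := Iso (replaceD u d d') u

def OccursIn (d : D) (u : DataWord A D) : Prop := ∃ p ∈ u, p.2 = d

/-- `d` is `f`-memorable in `u`. -/
def Memorable (f : Transduction A G D) (d : D) (u : DataWord A D) : Prop :=
  ∃ (v : DataWord A D) (d' : D), SafeRepl d d' u ∧
    leftFac f (replaceD u d d') v ≠ leftFac f u v

/-- `d` is `f`-vulnerable in `u`. -/
def Vulnerable (f : Transduction A G D) (d : D) (u : DataWord A D) : Prop :=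
  ∃ (u' v : DataWord A D) (d' : D), ¬ OccursIn d u' ∧
    SafeRepl d d' (u ++ u' ++ v) ∧
    rightFac f (u ++ u') (replaceD v d d') ≠ rightFac f (u ++ u') v

/-- `d` is `f`-influencing in `u`. -/
def Influencing (f : Transduction A G D) (d : D) (u : DataWord A D) : Prop :=
  Memorable f d u ∨ Vulnerable f d u

/-- The last occurrence of `d` in `u` is at (0-based) index `i`. -/
def IsLastOcc (u : DataWord A D) (d : D) (i : ℕ) : Prop :=
  (∃ a : A, u[i]? = some (a, d)) ∧ ∀ j : ℕ, i < j → ∀ p : A × D, u[j]? = some p → p.2 ≠ d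

/-- `d` is fresher than `e` in `u`: the last occurrence of `d` in `u` is
strictly to the right of the last occurrence of `e`. -/
def Fresher (u : DataWord A D) (d e : D) : Prop :=
  ∃ i j : ℕ, IsLastOcc u d i ∧ IsLastOcc u e j ∧ j < i

/-- `l` is the sequence of all `f`-influencing values of `u`, listed freshest
first: the `i`-th element (1-based) is the `i`-th `f`-influencing value of `u`.
(The paper writes this sequence in the reverse direction, as `d_m ⋯ d_1`.) -/
def IsIflSeq (f : Transduction A G D) (u : DataWord A D) (l : List D) : Prop :=
  (∀ d, d ∈ l ↔ Influencing f d u) ∧ l.Nodup ∧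
  ∀ (i j : ℕ) (hi : i < l.length) (hj : j < l.length), i < j →
    Fresher u (l.get ⟨i, hi⟩) (l.get ⟨j, hj⟩)

/-- The type annotation of an influencing value. -/
inductive IflType where
  | vm | m | v
  deriving DecidableEq

def HasIflType (f : Transduction A G D) (u : DataWord A D) (d : D) :
    IflType → Prop
  | .vm => Memorable f d u ∧ Vulnerable f d u
  | .m => Memorable f d u ∧ ¬ Vulnerable f d u
  | .v => Vulnerable f d u ∧ ¬ Memorable f d u

/-- `al` is `aifl_f(u)` (listed freshest first). -/
def IsAiflSeq (f : Transduction A G D) (u : DataWord A D)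
    (al : List (D × IflType)) : Prop :=
  IsIflSeq f u (al.map Prod.fst) ∧ ∀ p ∈ al, HasIflType f u p.1 p.2

/-- The equivalence `u1 ≡_f u2`. -/
def FEquiv (f : Transduction A G D) (u1 u2 : DataWord A D) : Prop :=
  ∃ π : Equiv.Perm D,
    (∀ v, foShift ((u1.length : ℤ) - (u2.length : ℤ))
        (leftFac f (permW π u2) v) = leftFac f u1 v) ∧
    (∀ al, IsAiflSeq f (permW π u2) al ↔ IsAiflSeq f u1 al) ∧
    (∀ u v1 v2, (rightFac f (u1 ++ u) v1 = rightFac f (u1 ++ u) v2) ↔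
        (rightFac f (permW π u2 ++ u) v1 = rightFac f (permW π u2 ++ u) v2))

/-- `≡_f` has finitely many equivalence classes. -/
def FEquivFiniteIndex (f : Transduction A G D) : Prop :=
  ∃ S : Set (DataWord A D), S.Finite ∧ ∀ u, ∃ r ∈ S, FEquiv f r u

/-- `E` is an equalizing scheme for `f` with associated sequence `δ 1, δ 2, ⋯`
(the value `δ 0` is irrelevant here): for every data word `u`, the `i`-th
`f`-influencing value of `E(u)(u)` is `δ i`. -/
def IsEqualizingSchemeWith (f : Transduction A G D)
    (E : DataWord A D → Equiv.Perm D) (δ : ℕ → D) : Prop :=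
  ∀ (u : DataWord A D) (l : List D), IsIflSeq f (permW (E u) u) l →
    ∀ (i : ℕ) (h : i < l.length), l.get ⟨i, h⟩ = δ (i + 1)

def IsEqualizingScheme (f : Transduction A G D)
    (E : DataWord A D → Equiv.Perm D) : Prop :=
  ∃ δ : ℕ → D, IsEqualizingSchemeWith f E δ

/-- `v1 ≡_f^E v2`. -/
def REquiv (f : Transduction A G D) (E : DataWord A D → Equiv.Perm D)
    (v1 v2 : DataWord A D) : Prop :=
  ∀ u, rightFac f (permW (E u) u) v1 = rightFac f (permW (E u) u) v2

/-- `≡_f^E` has finitely many equivalence classes. -/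
def REquivFiniteIndex (f : Transduction A G D)
    (E : DataWord A D → Equiv.Perm D) : Prop :=
  ∃ S : Set (DataWord A D), S.Finite ∧ ∀ v, ∃ r ∈ S, REquiv f E r v

/-- The blocks of a factored output: the maximal infixes consisting of
retained triples, in order. -/
def triBlocks (l : List (FOElem G D)) : List (List (FOElem G D)) :=
  (l.splitOnP fun e => !e.isTri).filter fun b => !b.isEmpty

/-- Helper for concretizing non-right blocks: walk `f(u̲ ∣ v̲ ∣ w̲)` and
substitute the `i`-th occurrence of the left mark by the `i`-th left block
(taken from `L`) and the `j`-th occurrence of the middle mark by the `j`-th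
middle block (taken from `M`); right marks are turned into separators. -/
def annotateNR (L M : List (List (FOElem G D))) :
    List (FOElem G D) → ℕ → ℕ → List (Option (List (FOElem G D)))
  | [], _, _ => []
  | .left :: rest, i, j => some (L.getD i []) :: annotateNR L M rest (i + 1) j
  | .middle :: rest, i, j => some (M.getD j []) :: annotateNR L M rest i (j + 1)
  | .right :: rest, i, j => none :: annotateNR L M rest i j
  | .tri g d o :: rest, i, j => some [.tri g d o] :: annotateNR L M rest i j

/-- The concretizations of the non-right blocks of `f(u̲ ∣ v̲ ∣ w̲)`, in order:
the concretization of a non-right block is the concatenation of the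
concretizations of the left blocks (taken from `f(u ∣ v·w̲)`) and the middle
blocks (taken from `f(u̲ ∣ v ∣ w̲)`) occurring in it. -/
def concretizedNRBlocks (f : Transduction A G D) (u v w : DataWord A D) :
    List (List (FOElem G D)) :=
  (((annotateNR (triBlocks (rightFac f u (v ++ w))) (triBlocks (threeFac f u v w))
        (allFac f u v w) 0 0).splitOnP fun o => o.isNone).filter
      fun grp => !grp.isEmpty).map fun grp => grp.reduceOption.flatten

/-- `π` tracks influencing values (relative to the sequence `δ`) on `w`:
the `i`-th `f`-influencing value of `w` is `π (δ i)`. -/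
def TracksInfluencing (f : Transduction A G D) (δ : ℕ → D) (π : Equiv.Perm D)
    (w : DataWord A D) : Prop :=
  ∀ l, IsIflSeq f w l → ∀ (i : ℕ) (h : i < l.length), l.get ⟨i, h⟩ = π (δ (i + 1))

end SSRT

open SSRT

namespace SSRTAux
open SSRT
set_option linter.unusedSectionVars false
set_option linter.unnecessarySimpa false
set_option linter.unreachableTactic false
set_option linter.unusedTactic false

variable {A G D : Type} [DecidableEq D] [DecidableEq G]

/-! ### Collapse basics -/

abbrev NAdj (x y : FOElem G D) : Prop := ¬(x = y ∧ x.isMark = true)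

theorem collapse_nil : collapse ([] : List (FOElem G D)) = [] := rfl

theorem collapse_singleton (a : FOElem G D) : collapse [a] = [a] := rfl

theorem collapse_cons_cons (a b : FOElem G D) (l : List (FOElem G D)) :
    collapse (a :: b :: l) =
      if a = b ∧ a.isMark then collapse (b :: l) else a :: collapse (b :: l) := rfl

theorem collapse_head (b : FOElem G D) (l : List (FOElem G D)) :
    ∃ t, collapse (b :: l) = b :: t := by
  induction l generalizing b with
  | nil => exact ⟨[], rfl⟩
  | cons c l ih =>
    rw [collapse_cons_cons]
    by_cases h : b = c ∧ b.isMark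
    · rw [if_pos h]
      obtain ⟨t, ht⟩ := ih c
      exact ⟨t, by rw [ht, h.1]⟩
    · rw [if_neg h]
      exact ⟨_, rfl⟩

/-- `consColl`: prepend an element to an (already collapsed) list. -/
def consColl (x : FOElem G D) : List (FOElem G D) → List (FOElem G D)
  | [] => [x]
  | y :: t => if x = y ∧ x.isMark then y :: t else x :: y :: t

theorem collapse_cons (x : FOElem G D) (P : List (FOElem G D)) :
    collapse (x :: P) = consColl x (collapse P) := by
  cases P with
  | nil => rfl
  | cons y P' =>
    obtain ⟨t, ht⟩ := collapse_head y P'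
    rw [collapse_cons_cons, ht, consColl]

theorem collapse_cons_of_not_mark {a : FOElem G D} (h : ¬ a.isMark = true)
    (l : List (FOElem G D)) : collapse (a :: l) = a :: collapse l := by
  rw [collapse_cons]
  cases hc : collapse l with
  | nil => rfl
  | cons y t => rw [consColl, if_neg (by tauto)]

theorem collapse_chain' : ∀ l : List (FOElem G D), (collapse l).Chain' NAdj
  | [] => List.isChain_nil
  | [a] => by simp only [collapse]; exact List.isChain_singleton a
  | a :: b :: l => by
    rw [collapse_cons_cons]
    split
    · exact collapse_chain' (b :: l)
    · obtain ⟨t, ht⟩ := collapse_head b l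
      have h2 := collapse_chain' (b :: l)
      rw [ht] at h2 ⊢
      refine List.isChain_cons_cons.2 ?_
      exact ⟨by assumption, h2⟩

theorem mem_of_mem_collapse : ∀ {l : List (FOElem G D)} {x : FOElem G D},
    x ∈ collapse l → x ∈ l
  | [], x, h => by simpa [collapse] using h
  | [a], x, h => by simpa [collapse] using h
  | a :: b :: l, x, h => by
    rw [collapse_cons_cons] at h
    split at h
    · exact List.mem_cons_of_mem _ (mem_of_mem_collapse h)
    · rcases List.mem_cons.1 h with h | h
      · exact h ▸ List.mem_cons_self
      · exact List.mem_cons_of_mem _ (mem_of_mem_collapse h)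

/-- Collapsing after a mark-fixing remap is insensitive to earlier collapsing. -/
theorem collapse_map_collapse (h : FOElem G D → FOElem G D)
    (hh : ∀ e : FOElem G D, e.isMark = true → h e = e) :
    ∀ l : List (FOElem G D),
      collapse (List.map h (collapse l)) = collapse (List.map h l)
  | [] => rfl
  | [a] => rfl
  | a :: b :: l => by
    rw [collapse_cons_cons]
    split
    · rename_i hc
      have ih := collapse_map_collapse h hh (b :: l)
      rw [ih, List.map_cons, List.map_cons, List.map_cons]
      rw [hh a hc.2, hh b (hc.1 ▸ hc.2), hc.1]
      rw [collapse_cons_cons, if_pos ⟨rfl, hc.1 ▸ hc.2⟩]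
    · have ih := collapse_map_collapse h hh (b :: l)
      calc collapse (List.map h (a :: collapse (b :: l)))
          = consColl (h a) (collapse (List.map h (collapse (b :: l)))) :=
            collapse_cons (h a) (List.map h (collapse (b :: l)))
        _ = consColl (h a) (collapse (List.map h (b :: l))) := by rw [ih]
        _ = collapse (List.map h (a :: b :: l)) :=
            (collapse_cons (h a) (List.map h (b :: l))).symm

/-- Collapse commutes with injective, mark-status-preserving elementwise maps. -/
theorem collapse_map_comm (g : FOElem G D → FOElem G D)
    (hinj : ∀ x y : FOElem G D, g x = g y → x = y)
    (hmark : ∀ x : FOElem G D, (g x).isMark = x.isMark) :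
    ∀ l : List (FOElem G D), collapse (List.map g l) = List.map g (collapse l)
  | [] => rfl
  | [a] => rfl
  | a :: b :: l => by
    have hcond : (g a = g b ∧ (g a).isMark = true) ↔ (a = b ∧ a.isMark = true) := by
      constructor
      · rintro ⟨h1, h2⟩; exact ⟨hinj _ _ h1, (hmark a) ▸ h2⟩
      · rintro ⟨h1, h2⟩; exact ⟨h1 ▸ rfl, (hmark a).symm ▸ h2⟩
    rw [List.map_cons, List.map_cons, collapse_cons_cons, collapse_cons_cons]
    by_cases hc : a = b ∧ a.isMark
    · rw [if_pos (hcond.2 hc), if_pos hc, ← List.map_cons, collapse_map_comm g hinj hmark]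
    · rw [if_neg (fun h => hc (hcond.1 h)), if_neg hc, ← List.map_cons,
        collapse_map_comm g hinj hmark, List.map_cons]

theorem collapse_append_chain' :
    ∀ (gp X : List (FOElem G D)), gp.Chain' NAdj →
      (∀ a ∈ gp.getLast?, ∀ b ∈ X.head?, NAdj a b) →
      collapse (gp ++ X) = gp ++ collapse X
  | [], X, _, _ => rfl
  | [x], X, _, hl => by
    rw [List.singleton_append, collapse_cons]
    cases hX : collapse X with
    | nil => rfl
    | cons y t =>
      have hy : y ∈ X.head? := by
        cases X with
        | nil => simp [collapse] at hX
        | cons z X' =>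
          obtain ⟨t', ht'⟩ := collapse_head z X'
          rw [ht'] at hX
          cases hX
          simp
      rw [consColl, if_neg (hl x (by simp) y hy)]
      simp
  | x :: y :: gp', X, hc, hl => by
    rw [List.cons_append, List.cons_append, collapse_cons_cons,
      if_neg (List.isChain_cons_cons.1 hc).1, ← List.cons_append,
      collapse_append_chain' (y :: gp') X (List.isChain_cons_cons.1 hc).2
        (by simpa using hl)]
    rfl

theorem collapse_const_append (m : FOElem G D) (hm : m.isMark = true) :
    ∀ (Y X : List (FOElem G D)), (∀ x ∈ Y, x = m) → Y ≠ [] →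
      collapse (Y ++ X) = collapse (m :: X) := by
  intro Y
  induction Y with
  | nil => intro X _ hne; exact absurd rfl hne
  | cons y Y' ih =>
    intro X hY _
    have h1 : y = m := hY y (by simp)
    cases Y' with
    | nil => rw [h1]; rfl
    | cons y₂ Y'' =>
      have h2 : y₂ = m := hY y₂ (by simp)
      rw [h1, h2, List.cons_append, List.cons_append, collapse_cons_cons, if_pos ⟨rfl, hm⟩,
        ← List.cons_append]
      have h3 := ih X (fun x hx => hY x (List.mem_cons_of_mem _ hx)) (by simp)
      rw [h2] at h3
      exact h3


/-! ### Values, permutations, replacement -/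

def vals (u : DataWord A D) : List D := u.map Prod.snd

theorem occursIn_iff_mem_vals {d : D} {u : DataWord A D} :
    OccursIn d u ↔ d ∈ vals u := by
  simp [OccursIn, vals, List.mem_map]

def valMap (g : D → D) (u : DataWord A D) : DataWord A D :=
  u.map fun p => (p.1, g p.2)

theorem permW_eq_valMap (π : Equiv.Perm D) (u : DataWord A D) :
    permW π u = valMap (π ·) u := rfl

theorem replaceD_eq_valMap (u : DataWord A D) (d d' : D) :
    replaceD u d d' = valMap (fun x => if x = d then d' else x) u := rfl

theorem valMap_valMap (g g' : D → D) (u : DataWord A D) :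
    valMap g (valMap g' u) = valMap (g ∘ g') u := by
  simp [valMap, List.map_map, Function.comp]

theorem valMap_congr {g g' : D → D} {u : DataWord A D}
    (h : ∀ x ∈ vals u, g x = g' x) : valMap g u = valMap g' u := by
  unfold valMap
  apply List.map_congr_left
  intro p hp
  rw [h p.2 (by simp [vals, List.mem_map]; exact ⟨p.1, hp⟩)]

theorem valMap_id (u : DataWord A D) : valMap (fun x => x) u = u := by
  simp [valMap]

theorem valMap_append (g : D → D) (u v : DataWord A D) :
    valMap g (u ++ v) = valMap g u ++ valMap g v := List.map_append

theorem length_valMap (g : D → D) (u : DataWord A D) :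
    (valMap g u).length = u.length := List.length_map _

theorem vals_valMap (g : D → D) (u : DataWord A D) :
    vals (valMap g u) = (vals u).map g := by
  simp [vals, valMap, List.map_map, Function.comp]

theorem length_permW (π : Equiv.Perm D) (u : DataWord A D) :
    (permW π u).length = u.length := List.length_map _

theorem permW_append (π : Equiv.Perm D) (u v : DataWord A D) :
    permW π (u ++ v) = permW π u ++ permW π v := List.map_append

theorem permW_permW (π ρ : Equiv.Perm D) (u : DataWord A D) :
    permW π (permW ρ u) = permW (ρ.trans π) u := by
  rw [permW_eq_valMap, permW_eq_valMap, permW_eq_valMap, valMap_valMap]; rfl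

theorem permW_refl (u : DataWord A D) : permW (Equiv.refl D) u = u := by
  rw [permW_eq_valMap]; exact valMap_id u

theorem permW_inv_permW (π : Equiv.Perm D) (u : DataWord A D) :
    permW π⁻¹ (permW π u) = u := by
  rw [permW_permW]
  have : π.trans π⁻¹ = Equiv.refl D := by ext x; simp
  rw [this, permW_refl]

theorem occursIn_permW {π : Equiv.Perm D} {d : D} {u : DataWord A D} :
    OccursIn (π d) (permW π u) ↔ OccursIn d u := by
  rw [occursIn_iff_mem_vals, occursIn_iff_mem_vals, permW_eq_valMap, vals_valMap]
  constructor
  · rintro h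
    obtain ⟨x, hx, he⟩ := List.mem_map.1 h
    exact (π.injective he) ▸ hx
  · intro h; exact List.mem_map.2 ⟨d, h, rfl⟩

theorem replaceD_self (u : DataWord A D) (a : D) : replaceD u a a = u := by
  rw [replaceD_eq_valMap]
  rw [show (fun x => if x = a then a else x) = fun x : D => x from funext fun x => by
    split <;> simp_all]
  exact valMap_id u

theorem replaceD_of_not_occurs {u : DataWord A D} {a : D} (b : D)
    (h : ¬ OccursIn a u) : replaceD u a b = u := by
  conv_rhs => rw [← valMap_id u]
  rw [replaceD_eq_valMap]
  apply valMap_congr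
  intro x hx
  rw [if_neg]
  rintro rfl
  exact h (occursIn_iff_mem_vals.2 (by simpa [valMap, vals, List.map_id] using hx))

theorem replaceD_eq_permW_swap {u : DataWord A D} {a b : D}
    (h : ¬ OccursIn b u) : replaceD u a b = permW (Equiv.swap a b) u := by
  rw [replaceD_eq_valMap, permW_eq_valMap]
  apply valMap_congr
  intro x hx
  by_cases hxa : x = a
  · simp [hxa, Equiv.swap_apply_left]
  · rw [if_neg hxa, Equiv.swap_apply_of_ne_of_ne hxa]
    rintro rfl
    exact h (occursIn_iff_mem_vals.2 hx)

theorem exists_fresh [Infinite D] (L : List D) : ∃ b : D, b ∉ L := by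
  obtain ⟨b, hb⟩ := Infinite.exists_notMem_finset L.toFinset
  exact ⟨b, fun h => hb (List.mem_toFinset.2 h)⟩

/-! ### Elementwise operations on factored outputs -/

def pfo (π : Equiv.Perm D) : FOElem G D → FOElem G D
  | .tri g d o => .tri g (π d) o
  | .left => .left
  | .middle => .middle
  | .right => .right

theorem permFO_eq_map (π : Equiv.Perm D) (l : List (FOElem G D)) :
    permFO π l = List.map (pfo π) l := by
  unfold permFO
  apply List.map_congr_left
  intro e _
  cases e <;> rfl

theorem pfo_isMark (π : Equiv.Perm D) (e : FOElem G D) :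
    (pfo π e).isMark = e.isMark := by cases e <;> rfl

theorem pfo_inj (π : Equiv.Perm D) (x y : FOElem G D) (h : pfo π x = pfo π y) :
    x = y := by
  cases x <;> cases y <;> simp_all [pfo]

theorem pfo_pfo (π ρ : Equiv.Perm D) (e : FOElem G D) :
    pfo π (pfo ρ e) = pfo (ρ.trans π) e := by cases e <;> rfl

theorem permFO_permFO (π ρ : Equiv.Perm D) (l : List (FOElem G D)) :
    permFO π (permFO ρ l) = permFO (ρ.trans π) l := by
  rw [permFO_eq_map, permFO_eq_map, permFO_eq_map, List.map_map]
  exact List.map_congr_left fun e _ => pfo_pfo π ρ e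

theorem permFO_injective (π : Equiv.Perm D) {l₁ l₂ : List (FOElem G D)}
    (h : permFO π l₁ = permFO π l₂) : l₁ = l₂ := by
  have key : ∀ l : List (FOElem G D),
      List.map (pfo π⁻¹) (List.map (pfo π) l) = l := by
    intro l
    rw [List.map_map]
    have h2 : ∀ e ∈ l, (pfo π⁻¹ ∘ pfo π) e = id e := by
      intro e _
      cases e <;> simp [pfo, Function.comp]
    rw [List.map_congr_left h2, List.map_id]
  rw [permFO_eq_map, permFO_eq_map] at h
  rw [← key l₁, ← key l₂, h]

theorem collapse_permFO (π : Equiv.Perm D) (l : List (FOElem G D)) :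
    collapse (permFO π l) = permFO π (collapse l) := by
  rw [permFO_eq_map, permFO_eq_map]
  exact collapse_map_comm _ (pfo_inj π) (pfo_isMark π) l

def sfo (z : ℤ) : FOElem G D → FOElem G D
  | .tri g d o => .tri g d (o + z)
  | .left => .left
  | .middle => .middle
  | .right => .right

theorem foShift_eq_map (z : ℤ) (l : List (FOElem G D)) :
    foShift z l = List.map (sfo z) l := by
  unfold foShift
  apply List.map_congr_left
  intro e _
  cases e <;> rfl

theorem sfo_isMark (z : ℤ) (e : FOElem G D) : (sfo z e).isMark = e.isMark := by
  cases e <;> rfl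

theorem sfo_inj (z : ℤ) (x y : FOElem G D) (h : sfo z x = sfo z y) : x = y := by
  cases x <;> cases y <;> simp_all [sfo]

theorem collapse_foShift (z : ℤ) (l : List (FOElem G D)) :
    collapse (foShift z l) = foShift z (collapse l) := by
  rw [foShift_eq_map, foShift_eq_map]
  exact collapse_map_comm _ (sfo_inj z) (sfo_isMark z) l

theorem foShift_injective (z : ℤ) {l₁ l₂ : List (FOElem G D)}
    (h : foShift z l₁ = foShift z l₂) : l₁ = l₂ := by
  rw [foShift_eq_map, foShift_eq_map] at h
  exact List.map_injective_iff.2 (fun x y => sfo_inj z x y) h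

theorem sfo_pfo (z : ℤ) (π : Equiv.Perm D) (e : FOElem G D) :
    sfo z (pfo π e) = pfo π (sfo z e) := by cases e <;> rfl

theorem foShift_permFO (z : ℤ) (π : Equiv.Perm D) (l : List (FOElem G D)) :
    foShift z (permFO π l) = permFO π (foShift z l) := by
  rw [foShift_eq_map, permFO_eq_map, permFO_eq_map, foShift_eq_map,
    List.map_map, List.map_map]
  exact List.map_congr_left fun e _ => sfo_pfo z π e


/-! ### Factored outputs as collapsed markings -/

def markL (n : ℕ) (t : G × D × ℕ) : FOElem G D :=
  if t.2.2 ≤ n then .left else .tri t.1 t.2.1 (t.2.2 : ℤ)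

def markR (n : ℕ) (t : G × D × ℕ) : FOElem G D :=
  if n < t.2.2 then .right else .tri t.1 t.2.1 (t.2.2 : ℤ)

theorem leftFac_eq (f : Transduction A G D) (u v : DataWord A D) :
    leftFac f u v = collapse (List.map (markL u.length) (f (u ++ v))) := rfl

theorem rightFac_eq (f : Transduction A G D) (u v : DataWord A D) :
    rightFac f u v = collapse (List.map (markR u.length) (f (u ++ v))) := rfl

theorem markL_perm (π : Equiv.Perm D) (n : ℕ) (t : G × D × ℕ) :
    markL n (t.1, π t.2.1, t.2.2) = pfo π (markL n t) := by
  show (if t.2.2 ≤ n then FOElem.left else .tri t.1 (π t.2.1) (t.2.2 : ℤ)) =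
    pfo π (if t.2.2 ≤ n then FOElem.left else .tri t.1 t.2.1 (t.2.2 : ℤ))
  split <;> rfl

theorem markR_perm (π : Equiv.Perm D) (n : ℕ) (t : G × D × ℕ) :
    markR n (t.1, π t.2.1, t.2.2) = pfo π (markR n t) := by
  show (if n < t.2.2 then FOElem.right else .tri t.1 (π t.2.1) (t.2.2 : ℤ)) =
    pfo π (if n < t.2.2 then FOElem.right else .tri t.1 t.2.1 (t.2.2 : ℤ))
  split <;> rfl

theorem leftFac_perm {f : Transduction A G D} (hperm : PermInvariant f)
    (π : Equiv.Perm D) (U V : DataWord A D) :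
    leftFac f (permW π U) (permW π V) = permFO π (leftFac f U V) := by
  rw [leftFac_eq, leftFac_eq, ← permW_append, hperm, length_permW,
    permFO_eq_map, ← collapse_map_comm _ (pfo_inj π) (pfo_isMark π), ← permFO_eq_map,
    permFO_eq_map]
  congr 1
  show List.map (markL U.length)
      (List.map (fun t : G × D × ℕ => (t.1, π t.2.1, t.2.2)) (f (U ++ V))) = _
  rw [List.map_map, List.map_map]
  exact List.map_congr_left fun t _ => markL_perm π U.length t

theorem rightFac_perm {f : Transduction A G D} (hperm : PermInvariant f)
    (π : Equiv.Perm D) (U V : DataWord A D) :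
    rightFac f (permW π U) (permW π V) = permFO π (rightFac f U V) := by
  rw [rightFac_eq, rightFac_eq, ← permW_append, hperm, length_permW,
    permFO_eq_map, ← collapse_map_comm _ (pfo_inj π) (pfo_isMark π), ← permFO_eq_map,
    permFO_eq_map]
  congr 1
  show List.map (markR U.length)
      (List.map (fun t : G × D × ℕ => (t.1, π t.2.1, t.2.2)) (f (U ++ V))) = _
  rw [List.map_map, List.map_map]
  exact List.map_congr_left fun t _ => markR_perm π U.length t

/-! ### Remaps between factored outputs -/

def toLeftLE (n : ℤ) : FOElem G D → FOElem G D
  | .tri g d o => if o ≤ n then .left else .tri g d o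
  | e => e

def toRightGT (n : ℤ) : FOElem G D → FOElem G D
  | .tri g d o => if n < o then .right else .tri g d o
  | e => e

theorem toLeftLE_isMarkFix (n : ℤ) :
    ∀ e : FOElem G D, e.isMark = true → toLeftLE n e = e := by
  intro e he
  cases e <;> simp_all [FOElem.isMark, FOElem.isTri, toLeftLE]

theorem toRightGT_isMarkFix (n : ℤ) :
    ∀ e : FOElem G D, e.isMark = true → toRightGT n e = e := by
  intro e he
  cases e <;> simp_all [FOElem.isMark, FOElem.isTri, toRightGT]

theorem toLeftLE_markL {n₀ n : ℕ} (h : n₀ ≤ n) (t : G × D × ℕ) :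
    toLeftLE (n : ℤ) (markL n₀ t) = markL n t := by
  unfold markL
  by_cases h1 : t.2.2 ≤ n₀
  · rw [if_pos h1, if_pos (le_trans h1 h)]; rfl
  · rw [if_neg h1]
    show (if (t.2.2 : ℤ) ≤ (n : ℤ) then FOElem.left else .tri t.1 t.2.1 (t.2.2 : ℤ)) = _
    by_cases h2 : t.2.2 ≤ n
    · rw [if_pos (by exact_mod_cast h2), if_pos h2]
    · rw [if_neg (by exact_mod_cast h2), if_neg h2]

theorem toRightGT_markR {n₀ n : ℕ} (h : n₀ ≤ n) (t : G × D × ℕ) :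
    toRightGT (n₀ : ℤ) (markR n t) = markR n₀ t := by
  unfold markR
  by_cases h1 : n < t.2.2
  · rw [if_pos h1, if_pos (lt_of_le_of_lt h h1)]; rfl
  · rw [if_neg h1]
    show (if (n₀ : ℤ) < (t.2.2 : ℤ) then FOElem.right else .tri t.1 t.2.1 (t.2.2 : ℤ)) = _
    by_cases h2 : n₀ < t.2.2
    · rw [if_pos (by exact_mod_cast h2), if_pos h2]
    · rw [if_neg (by exact_mod_cast h2), if_neg h2]

/-- The mid marking. -/
def markM (n₀ n : ℕ) (t : G × D × ℕ) : FOElem G D :=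
  if t.2.2 ≤ n₀ then .left
  else if t.2.2 ≤ n then .tri t.1 t.2.1 (t.2.2 : ℤ) else .right

theorem toLeftLE_markR {n₀ n : ℕ} (h : n₀ ≤ n) (t : G × D × ℕ) :
    toLeftLE (n₀ : ℤ) (markR n t) = markM n₀ n t := by
  unfold markR markM
  by_cases h1 : n < t.2.2
  · rw [if_pos h1, if_neg (by omega), if_neg (by omega)]; rfl
  · rw [if_neg h1]
    show (if (t.2.2 : ℤ) ≤ (n₀ : ℤ) then FOElem.left else .tri t.1 t.2.1 (t.2.2 : ℤ)) = _
    by_cases h2 : t.2.2 ≤ n₀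
    · rw [if_pos (by exact_mod_cast h2), if_pos h2]
    · rw [if_neg (by exact_mod_cast h2), if_neg h2, if_pos (by omega)]

theorem toRightGT_markL {n₀ n : ℕ} (h : n₀ ≤ n) (t : G × D × ℕ) :
    toRightGT (n : ℤ) (markL n₀ t) = markM n₀ n t := by
  unfold markL markM
  by_cases h1 : t.2.2 ≤ n₀
  · rw [if_pos h1, if_pos h1]; rfl
  · rw [if_neg h1, if_neg h1]
    show (if (n : ℤ) < (t.2.2 : ℤ) then FOElem.right else .tri t.1 t.2.1 (t.2.2 : ℤ)) = _
    by_cases h2 : t.2.2 ≤ n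
    · rw [if_neg (by exact_mod_cast (by omega : ¬ n < t.2.2)), if_pos h2]
    · rw [if_pos (by exact_mod_cast (by omega : n < t.2.2)), if_neg h2]

/-! ### Decomposition lemmas -/

theorem leftFac_append (f : Transduction A G D) (Z M V : DataWord A D) :
    leftFac f (Z ++ M) V =
      collapse (List.map (toLeftLE ((Z.length + M.length : ℕ) : ℤ))
        (leftFac f Z (M ++ V))) := by
  rw [leftFac_eq, leftFac_eq, collapse_map_collapse _ (toLeftLE_isMarkFix _),
    List.map_map, List.length_append, List.append_assoc]
  congr 1
  exact (List.map_congr_left fun t _ =>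
    toLeftLE_markL (Nat.le_add_right _ _) t).symm

theorem rightFac_append (f : Transduction A G D) (Z M V : DataWord A D) :
    rightFac f Z (M ++ V) =
      collapse (List.map (toRightGT (Z.length : ℤ)) (rightFac f (Z ++ M) V)) := by
  rw [rightFac_eq, rightFac_eq, collapse_map_collapse _ (toRightGT_isMarkFix _),
    List.map_map, List.length_append, List.append_assoc]
  congr 1
  exact (List.map_congr_left fun t _ =>
    toRightGT_markR (Nat.le_add_right _ _) t).symm

/-- The `T`-projection (middle view) of the fine factorisation. -/
def tFac (f : Transduction A G D) (Z M V : DataWord A D) : List (FOElem G D) :=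
  collapse (List.map (toLeftLE (Z.length : ℤ)) (rightFac f (Z ++ M) V))

theorem tFac_eq_markM (f : Transduction A G D) (Z M V : DataWord A D) :
    tFac f Z M V = collapse (List.map (markM Z.length (Z.length + M.length))
      (f (Z ++ M ++ V))) := by
  rw [tFac, rightFac_eq, collapse_map_collapse _ (toLeftLE_isMarkFix _),
    List.map_map, List.length_append]
  congr 1
  exact List.map_congr_left fun t _ => toLeftLE_markR (Nat.le_add_right _ _) t

theorem tFac_eq_leftFac (f : Transduction A G D) (Z M V : DataWord A D) :
    tFac f Z M V = collapse (List.map (toRightGT ((Z.length + M.length : ℕ) : ℤ))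
      (leftFac f Z (M ++ V))) := by
  rw [tFac_eq_markM, leftFac_eq, collapse_map_collapse _ (toRightGT_isMarkFix _),
    List.map_map, List.append_assoc]
  congr 1
  exact (List.map_congr_left fun t _ =>
    toRightGT_markL (Nat.le_add_right _ _) t).symm

/-! ### Transfer of `leftFac` along condition (i) -/

theorem toLeftLE_sfo (n z : ℤ) (e : FOElem G D) :
    toLeftLE (n + z) (sfo z e) = sfo z (toLeftLE n e) := by
  cases e with
  | tri g d o =>
    show (if o + z ≤ n + z then FOElem.left else .tri g d (o + z)) =
      sfo z (if o ≤ n then FOElem.left else .tri g d o)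
    by_cases h : o ≤ n
    · rw [if_pos (by omega), if_pos h]; rfl
    · rw [if_neg (by omega), if_neg h]; rfl
  | left => rfl
  | middle => rfl
  | right => rfl

theorem leftFac_transfer {f : Transduction A G D} {u1 W2 : DataWord A D}
    (hLF : ∀ v, foShift ((u1.length : ℤ) - (W2.length : ℤ)) (leftFac f W2 v) =
      leftFac f u1 v) (M v : DataWord A D) :
    leftFac f (u1 ++ M) v =
      foShift ((u1.length : ℤ) - (W2.length : ℤ)) (leftFac f (W2 ++ M) v) := by
  set z : ℤ := (u1.length : ℤ) - (W2.length : ℤ) with hz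
  rw [leftFac_append f u1 M v, ← hLF (M ++ v), foShift_eq_map, List.map_map,
    leftFac_append f W2 M v, foShift_eq_map, ← collapse_map_comm _ (sfo_inj z)
      (sfo_isMark z), List.map_map]
  congr 1
  apply List.map_congr_left
  intro e _
  show toLeftLE ((u1.length + M.length : ℕ) : ℤ) (sfo z e) =
    sfo z (toLeftLE ((W2.length + M.length : ℕ) : ℤ) e)
  have harith : ((u1.length + M.length : ℕ) : ℤ) =
      ((W2.length + M.length : ℕ) : ℤ) + z := by push_cast; omega
  rw [harith]
  exact toLeftLE_sfo _ z e

/-! ### Iso and safe replacements -/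

theorem getElem?_valMap (g : D → D) (u : DataWord A D) (i : ℕ) :
    (valMap g u)[i]? = u[i]?.map fun p => (p.1, g p.2) := List.getElem?_map

theorem opt_map_eq_iff {g : D → D} {o1 o2 : Option D}
    (hinj : ∀ x ∈ o1, ∀ y ∈ o2, g x = g y → x = y) :
    o1.map g = o2.map g ↔ o1 = o2 := by
  cases o1 with
  | none => cases o2 <;> simp
  | some x =>
    cases o2 with
    | none => simp
    | some y =>
      simp only [Option.map_some, Option.some.injEq]
      exact ⟨fun h => hinj x rfl y rfl h, fun h => h ▸ rfl⟩

theorem snd_getElem?_mem {u : DataWord A D} {i : ℕ} {x : D}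
    (h : u[i]?.map Prod.snd = some x) : x ∈ vals u := by
  cases hu : u[i]? with
  | none => rw [hu] at h; simp at h
  | some p =>
    rw [hu] at h
    simp only [Option.map_some, Option.some.injEq] at h
    exact h ▸ occursIn_iff_mem_vals.1 ⟨p, List.mem_iff_getElem?.2 ⟨i, hu⟩, rfl⟩

theorem iso_valMap_of_inj {g : D → D} (u : DataWord A D)
    (hinj : ∀ x ∈ vals u, ∀ y ∈ vals u, g x = g y → x = y) :
    Iso (valMap g u) u := by
  refine ⟨length_valMap g u, fun i => ?_, fun i j => ?_⟩
  · rw [getElem?_valMap, Option.map_map]; rfl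
  · have h1 : ∀ k : ℕ, (valMap g u)[k]?.map Prod.snd =
        (u[k]?.map Prod.snd).map g := by
      intro k; rw [getElem?_valMap, Option.map_map, Option.map_map]; rfl
    rw [h1 i, h1 j]
    apply opt_map_eq_iff
    intro x hx y hy
    exact hinj x (snd_getElem?_mem (Option.mem_def.1 hx)) y
      (snd_getElem?_mem (Option.mem_def.1 hy))

theorem safeRepl_of_fresh {u : DataWord A D} {a b : D} (h : ¬ OccursIn b u) :
    SafeRepl a b u := by
  rw [SafeRepl, replaceD_eq_valMap]
  apply iso_valMap_of_inj
  intro x hx y hy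
  have hbx : x ≠ b := fun he => h (occursIn_iff_mem_vals.2 (he ▸ hx))
  have hby : y ≠ b := fun he => h (occursIn_iff_mem_vals.2 (he ▸ hy))
  by_cases h1 : x = a <;> by_cases h2 : y = a
  · intro _; rw [h1, h2]
  · rw [if_pos h1, if_neg h2]; intro he; exact absurd he.symm hby
  · rw [if_neg h1, if_pos h2]; intro he; exact absurd he hbx
  · rw [if_neg h1, if_neg h2]; exact id

theorem not_occurs_of_safeRepl {u : DataWord A D} {a d' : D}
    (hs : SafeRepl a d' u) (ha : OccursIn a u) (hne : d' ≠ a) :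
    ¬ OccursIn d' u := by
  intro hd
  obtain ⟨p, hp, hpa⟩ := ha
  obtain ⟨q, hq, hqd⟩ := hd
  obtain ⟨i, hi⟩ := List.mem_iff_getElem?.1 hp
  obtain ⟨j, hj⟩ := List.mem_iff_getElem?.1 hq
  have hrep : ∀ (k : ℕ) (r : A × D), u[k]? = some r →
      (replaceD u a d')[k]?.map Prod.snd = some (if r.2 = a then d' else r.2) := by
    intro k r hr
    rw [replaceD_eq_valMap, getElem?_valMap, hr]
    rfl
  have h3 := (hs.2.2 i j).1
  rw [hrep i p hi, hrep j q hj, hpa, hqd, if_pos rfl, if_neg hne] at h3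
  have h4 := h3 rfl
  rw [hi, hj] at h4
  simp only [Option.map_some, Option.some.injEq] at h4
  rw [hpa, hqd] at h4
  exact hne h4.symm

theorem occurs_of_leftFac_replace_ne {ff : Transduction A G D} {u : DataWord A D}
    {a d' : D} {v : DataWord A D}
    (h : leftFac ff (replaceD u a d') v ≠ leftFac ff u v) :
    OccursIn a u ∧ d' ≠ a := by
  constructor
  · by_contra hno
    exact h (by rw [replaceD_of_not_occurs d' hno])
  · rintro rfl
    exact h (by rw [replaceD_self])

/-! ### Equivariance under permutations -/

theorem permW_replaceD (π : Equiv.Perm D) (u : DataWord A D) (d d' : D) :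
    permW π (replaceD u d d') = replaceD (permW π u) (π d) (π d') := by
  rw [replaceD_eq_valMap, replaceD_eq_valMap, permW_eq_valMap, permW_eq_valMap,
    valMap_valMap, valMap_valMap]
  apply valMap_congr
  intro x _
  simp only [Function.comp]
  by_cases hx : x = d
  · rw [if_pos hx, if_pos (by rw [hx])]
  · rw [if_neg hx, if_neg (fun hc => hx (π.injective hc))]

theorem iso_permW {π : Equiv.Perm D} {u v : DataWord A D} :
    Iso (permW π u) (permW π v) ↔ Iso u v := by
  have key : ∀ (ρ : Equiv.Perm D) (u v : DataWord A D), Iso u v →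
      Iso (permW ρ u) (permW ρ v) := by
    rintro ρ u v ⟨h1, h2, h3⟩
    refine ⟨by rw [length_permW, length_permW, h1], fun i => ?_, fun i j => ?_⟩
    · rw [permW_eq_valMap, permW_eq_valMap, getElem?_valMap, getElem?_valMap,
        Option.map_map, Option.map_map]
      exact h2 i
    · have hrw : ∀ (w : DataWord A D) (k : ℕ),
          (permW ρ w)[k]?.map Prod.snd = (w[k]?.map Prod.snd).map ρ := by
        intro w k
        rw [permW_eq_valMap, getElem?_valMap, Option.map_map, Option.map_map]
        rfl
      rw [hrw, hrw, hrw, hrw,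
        opt_map_eq_iff (fun x _ y _ h => ρ.injective h),
        opt_map_eq_iff (fun x _ y _ h => ρ.injective h)]
      exact h3 i j
  constructor
  · intro h
    have := key π⁻¹ _ _ h
    rwa [permW_inv_permW, permW_inv_permW] at this
  · exact key π u v

theorem safeRepl_permW {π : Equiv.Perm D} {a b : D} {u : DataWord A D} :
    SafeRepl (π a) (π b) (permW π u) ↔ SafeRepl a b u := by
  rw [SafeRepl, SafeRepl, ← permW_replaceD, iso_permW]

theorem memorable_permW {f : Transduction A G D} (hperm : PermInvariant f)
    (π : Equiv.Perm D) (d : D) (u : DataWord A D) :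
    Memorable f (π d) (permW π u) ↔ Memorable f d u := by
  have key : ∀ (ρ : Equiv.Perm D) (d : D) (u : DataWord A D),
      Memorable f d u → Memorable f (ρ d) (permW ρ u) := by
    rintro ρ d u ⟨v, d', hs, hne⟩
    refine ⟨permW ρ v, ρ d', safeRepl_permW.2 hs, ?_⟩
    rw [← permW_replaceD, leftFac_perm hperm, leftFac_perm hperm]
    intro hc
    exact hne (permFO_injective ρ hc)
  constructor
  · intro h
    have := key π⁻¹ _ _ h
    rwa [permW_inv_permW, show π⁻¹ (π d) = d from π.symm_apply_apply d] at this
  · exact key π d u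

theorem vulnerable_permW {f : Transduction A G D} (hperm : PermInvariant f)
    (π : Equiv.Perm D) (d : D) (u : DataWord A D) :
    Vulnerable f (π d) (permW π u) ↔ Vulnerable f d u := by
  have key : ∀ (ρ : Equiv.Perm D) (d : D) (u : DataWord A D),
      Vulnerable f d u → Vulnerable f (ρ d) (permW ρ u) := by
    rintro ρ d u ⟨u', v, d', hocc, hs, hne⟩
    refine ⟨permW ρ u', permW ρ v, ρ d', fun hc => hocc (occursIn_permW.1 hc), ?_, ?_⟩
    · rw [← permW_append, ← permW_append, safeRepl_permW]
      exact hs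
    · rw [← permW_replaceD, ← permW_append, rightFac_perm hperm, rightFac_perm hperm]
      intro hc
      exact hne (permFO_injective ρ hc)
  constructor
  · intro h
    have := key π⁻¹ _ _ h
    rwa [permW_inv_permW, show π⁻¹ (π d) = d from π.symm_apply_apply d] at this
  · exact key π d u

theorem influencing_permW {f : Transduction A G D} (hperm : PermInvariant f)
    (π : Equiv.Perm D) (d : D) (u : DataWord A D) :
    Influencing f (π d) (permW π u) ↔ Influencing f d u := by
  rw [Influencing, Influencing, memorable_permW hperm, vulnerable_permW hperm]

theorem isLastOcc_permW {π : Equiv.Perm D} {u : DataWord A D} {d : D} {i : ℕ} :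
    IsLastOcc (permW π u) (π d) i ↔ IsLastOcc u d i := by
  unfold IsLastOcc
  constructor
  · rintro ⟨⟨a, ha⟩, hlater⟩
    rw [permW_eq_valMap, getElem?_valMap] at ha
    cases hu : u[i]? with
    | none => rw [hu] at ha; simp at ha
    | some p =>
      rw [hu] at ha
      simp only [Option.map_some, Option.some.injEq, Prod.mk.injEq] at ha
      refine ⟨⟨p.1, congrArg some (Prod.ext_iff.2 ⟨rfl, π.injective ha.2⟩)⟩, ?_⟩
      intro j hj q hq hqd
      exact hlater j hj (q.1, π q.2)
        (by rw [permW_eq_valMap, getElem?_valMap, hq]; rfl)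
        (show π q.2 = π d by rw [hqd])
  · rintro ⟨⟨a, ha⟩, hlater⟩
    refine ⟨⟨a, by rw [permW_eq_valMap, getElem?_valMap, ha]; rfl⟩, ?_⟩
    intro j hj q hq hqd
    rw [permW_eq_valMap, getElem?_valMap] at hq
    cases hu : u[j]? with
    | none => rw [hu] at hq; simp at hq
    | some p =>
      rw [hu] at hq
      simp only [Option.map_some, Option.some.injEq] at hq
      have hq2 : q.2 = π p.2 := by rw [← hq]
      rw [hq2] at hqd
      exact hlater j hj p hu (π.injective hqd)

theorem fresher_permW {π : Equiv.Perm D} {u : DataWord A D} {d e : D} :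
    Fresher (permW π u) (π d) (π e) ↔ Fresher u d e := by
  unfold Fresher
  constructor
  · rintro ⟨i, j, h1, h2, h3⟩
    exact ⟨i, j, isLastOcc_permW.1 h1, isLastOcc_permW.1 h2, h3⟩
  · rintro ⟨i, j, h1, h2, h3⟩
    exact ⟨i, j, isLastOcc_permW.2 h1, isLastOcc_permW.2 h2, h3⟩

theorem isIflSeq_permW_of {f : Transduction A G D} (hperm : PermInvariant f)
    (ρ : Equiv.Perm D) {u : DataWord A D} {l : List D} (h : IsIflSeq f u l) :
    IsIflSeq f (permW ρ u) (l.map ρ) := by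
  obtain ⟨h1, h2, h3⟩ := h
  refine ⟨fun d => ?_, (List.nodup_map_iff ρ.injective).2 h2, fun i j hi hj hij => ?_⟩
  · constructor
    · intro hd
      obtain ⟨x, hx, he⟩ := List.mem_map.1 hd
      exact he ▸ (influencing_permW hperm ρ x u).2 ((h1 x).1 hx)
    · intro hd
      have hd2 : Influencing f (ρ (ρ⁻¹ d)) (permW ρ u) := by
        rwa [show ρ (ρ⁻¹ d) = d from ρ.apply_symm_apply d]
      have := (h1 (ρ⁻¹ d)).2 ((influencing_permW hperm ρ _ u).1 hd2)
      exact List.mem_map.2 ⟨ρ⁻¹ d, this, by simp⟩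
  · have hi' : i < l.length := by simpa using hi
    have hj' : j < l.length := by simpa using hj
    have := h3 i j hi' hj' hij
    simp only [List.get_eq_getElem, List.getElem_map]
    exact fresher_permW.2 this

theorem map_inv_map (π : Equiv.Perm D) (l : List D) :
    List.map (π⁻¹ : Equiv.Perm D) (List.map (π : Equiv.Perm D) l) = l := by
  rw [List.map_map]
  have h2 : List.map (⇑π⁻¹ ∘ ⇑π) l = List.map id l :=
    List.map_congr_left fun x _ => by simp
  rw [h2, List.map_id]

theorem isIflSeq_permW {f : Transduction A G D} (hperm : PermInvariant f)
    {π : Equiv.Perm D} {u : DataWord A D} {l : List D} :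
    IsIflSeq f (permW π u) (l.map π) ↔ IsIflSeq f u l := by
  constructor
  · intro h
    have := isIflSeq_permW_of hperm π⁻¹ h
    rwa [permW_inv_permW, map_inv_map] at this
  · exact isIflSeq_permW_of hperm π

/-! ### Uniqueness of the influencing sequence -/

theorem isLastOcc_unique {u : DataWord A D} {d : D} {i j : ℕ}
    (h1 : IsLastOcc u d i) (h2 : IsLastOcc u d j) : i = j := by
  by_contra hne
  rcases Nat.lt_or_ge i j with h | h
  · obtain ⟨a, ha⟩ := h2.1
    exact h1.2 j h (a, d) ha rfl
  · have h' : j < i := lt_of_le_of_ne h (Ne.symm hne)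
    obtain ⟨a, ha⟩ := h1.1
    exact h2.2 i h' (a, d) ha rfl

theorem fresher_asymm {u : DataWord A D} {d e : D}
    (h1 : Fresher u d e) (h2 : Fresher u e d) : False := by
  obtain ⟨i, j, hd, he, hji⟩ := h1
  obtain ⟨i', j', he', hd', hji'⟩ := h2
  have e1 := isLastOcc_unique hd hd'
  have e2 := isLastOcc_unique he he'
  omega

theorem isIflSeq_unique {f : Transduction A G D} {u : DataWord A D}
    {l1 l2 : List D} (h1 : IsIflSeq f u l1) (h2 : IsIflSeq f u l2) : l1 = l2 := by
  have hr : ∀ l : List D, IsIflSeq f u l → l.Pairwise (fun d e => Fresher u d e) := by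
    rintro l ⟨_, _, h3⟩
    rw [List.pairwise_iff_get]
    intro i j hij
    exact h3 i.1 j.1 i.2 j.2 hij
  haveI : Std.Antisymm (fun d e : D => Fresher u d e) :=
    ⟨fun a b ha hb => (fresher_asymm ha hb).elim⟩
  refine List.Perm.eq_of_pairwise' (hr l1 h1) (hr l2 h2) ?_
  rw [List.perm_ext_iff_of_nodup h1.2.1 h2.2.1]
  intro a
  rw [h1.1, h2.1]

theorem exists_aifl {f : Transduction A G D} {u : DataWord A D} {l : List D}
    (h : IsIflSeq f u l) : ∃ al : List (D × IflType),
      IsAiflSeq f u al ∧ al.map Prod.fst = l := by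
  classical
  refine ⟨l.map (fun d => (d, if Memorable f d u then
      (if Vulnerable f d u then IflType.vm else IflType.m) else IflType.v)), ?_, ?_⟩
  · constructor
    · rw [List.map_map]
      have h2 : List.map (Prod.fst ∘ fun d : D => ((d, if Memorable f d u then
          (if Vulnerable f d u then IflType.vm else IflType.m) else IflType.v) :
            D × IflType)) l = List.map id l := List.map_congr_left fun x _ => rfl
      rwa [h2, List.map_id]
    · intro p hp
      obtain ⟨d, hd, he⟩ := List.mem_map.1 hp
      have hinf : Influencing f d u := (h.1 d).1 hd
      subst he
      by_cases hm : Memorable f d u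
      · by_cases hv : Vulnerable f d u
        · rw [if_pos hm, if_pos hv]
          exact ⟨hm, hv⟩
        · rw [if_pos hm, if_neg hv]
          exact ⟨hm, hv⟩
      · rw [if_neg hm]
        exact ⟨hinf.resolve_left hm, hm⟩
  · rw [List.map_map]
    have h2 : List.map (Prod.fst ∘ fun d : D => ((d, if Memorable f d u then
        (if Vulnerable f d u then IflType.vm else IflType.m) else IflType.v) :
          D × IflType)) l = List.map id l := List.map_congr_left fun x _ => rfl
    rw [h2, List.map_id]

/-! ### Fresh values are not influencing -/

theorem occursIn_append {x : D} {u v : DataWord A D} :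
    OccursIn x (u ++ v) ↔ OccursIn x u ∨ OccursIn x v := by
  unfold OccursIn
  constructor
  · rintro ⟨p, hp, hx⟩
    rcases List.mem_append.1 hp with h | h
    · exact Or.inl ⟨p, h, hx⟩
    · exact Or.inr ⟨p, h, hx⟩
  · rintro (⟨p, hp, hx⟩ | ⟨p, hp, hx⟩)
    · exact ⟨p, List.mem_append.2 (Or.inl hp), hx⟩
    · exact ⟨p, List.mem_append.2 (Or.inr hp), hx⟩

theorem not_memorable_of_fresh {f : Transduction A G D} {d : D} {Z : DataWord A D}
    (h : ¬ OccursIn d Z) : ¬ Memorable f d Z := by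
  rintro ⟨v, d', _, hne⟩
  exact hne (by rw [replaceD_of_not_occurs d' h])

theorem rf_tri_occurs {f : Transduction A G D} (hpeek : NoDataPeeking f)
    {U V : DataWord A D} {g : G} {dv : D} {o : ℤ}
    (h : FOElem.tri g dv o ∈ rightFac f U V) : OccursIn dv U := by
  rw [rightFac_eq] at h
  have h2 := mem_of_mem_collapse h
  obtain ⟨t, ht, hmr⟩ := List.mem_map.1 h2
  unfold markR at hmr
  by_cases hc : U.length < t.2.2
  · rw [if_pos hc] at hmr; exact absurd hmr (by simp)
  · rw [if_neg hc] at hmr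
    have hdv : t.2.1 = dv := by
      have := congrArg (fun e : FOElem G D => match e with
        | .tri _ d _ => d | _ => dv) hmr
      simpa using this
    obtain ⟨i, a, hia, hio⟩ := hpeek (U ++ V) t ht
    have hi : i < U.length := by omega
    rw [List.getElem?_append, if_pos hi] at hia
    exact hdv ▸ ⟨(a, t.2.1), List.mem_iff_getElem?.2 ⟨i, hia⟩, rfl⟩

theorem permW_swap_of_fresh {u : DataWord A D} {d c : D}
    (hd : ¬ OccursIn d u) (hc : ¬ OccursIn c u) :
    permW (Equiv.swap d c) u = u := by
  rw [permW_eq_valMap]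
  conv_rhs => rw [← valMap_id u]
  apply valMap_congr
  intro x hx
  exact Equiv.swap_apply_of_ne_of_ne
    (fun he => hd (occursIn_iff_mem_vals.2 (he ▸ hx)))
    (fun he => hc (occursIn_iff_mem_vals.2 (he ▸ hx)))

theorem permFO_refl (l : List (FOElem G D)) : permFO (Equiv.refl D) l = l := by
  rw [permFO_eq_map]
  have h2 : List.map (pfo (Equiv.refl D)) l = List.map id l :=
    List.map_congr_left fun e _ => by cases e <;> rfl
  rw [h2, List.map_id]

theorem not_vulnerable_of_fresh {f : Transduction A G D}
    (hperm : PermInvariant f) (hpeek : NoDataPeeking f) {d : D} {Z : DataWord A D}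
    (h : ¬ OccursIn d Z) : ¬ Vulnerable f d Z := by
  rintro ⟨u', v, d', hocc, hs, hne⟩
  by_cases hdv : OccursIn d v
  case neg => exact hne (by rw [replaceD_of_not_occurs d' hdv])
  by_cases hdd : d' = d
  case pos => exact hne (by rw [hdd, replaceD_self])
  have hdw : OccursIn d (Z ++ u' ++ v) :=
    occursIn_append.2 (Or.inr hdv)
  have hd'w : ¬ OccursIn d' (Z ++ u' ++ v) := not_occurs_of_safeRepl hs hdw hdd
  have hd'zu : ¬ OccursIn d' (Z ++ u') :=
    fun hc => hd'w (occursIn_append.2 (Or.inl hc))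
  have hd'v : ¬ OccursIn d' v := fun hc => hd'w (occursIn_append.2 (Or.inr hc))
  have hdzu : ¬ OccursIn d (Z ++ u') := by
    rw [occursIn_append]
    rintro (hc | hc)
    · exact h hc
    · exact hocc hc
  set τ := Equiv.swap d d' with hτ
  have e1 : permW τ (Z ++ u') = Z ++ u' := permW_swap_of_fresh hdzu hd'zu
  have e2 : permW τ v = replaceD v d d' := (replaceD_eq_permW_swap hd'v).symm
  have e3 : rightFac f (Z ++ u') (replaceD v d d') =
      permFO τ (rightFac f (Z ++ u') v) := by
    rw [← e2]
    conv_lhs => rw [← e1]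
    exact rightFac_perm hperm τ (Z ++ u') v
  have e4 : permFO τ (rightFac f (Z ++ u') v) = rightFac f (Z ++ u') v := by
    rw [permFO_eq_map]
    have h5 : List.map (pfo τ) (rightFac f (Z ++ u') v) =
        List.map id (rightFac f (Z ++ u') v) := by
      apply List.map_congr_left
      intro e he
      cases e with
      | tri g dv o =>
        have hocc2 := rf_tri_occurs hpeek he
        have hnd : dv ≠ d := fun hc => hdzu (hc ▸ hocc2)
        have hnd' : dv ≠ d' := fun hc => hd'zu (hc ▸ hocc2)
        show FOElem.tri g (τ dv) o = FOElem.tri g dv o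
        rw [hτ, Equiv.swap_apply_of_ne_of_ne hnd hnd']
      | left => rfl
      | middle => rfl
      | right => rfl
    rw [h5, List.map_id]
  exact hne (e3.trans e4)

theorem not_influencing_of_fresh {f : Transduction A G D}
    (hperm : PermInvariant f) (hpeek : NoDataPeeking f) {d : D} {Z : DataWord A D}
    (h : ¬ OccursIn d Z) : ¬ Influencing f d Z := by
  rintro (hc | hc)
  · exact not_memorable_of_fresh h hc
  · exact not_vulnerable_of_fresh hperm hpeek h hc

theorem occurs_of_influencing {f : Transduction A G D}
    (hperm : PermInvariant f) (hpeek : NoDataPeeking f) {d : D} {Z : DataWord A D}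
    (h : Influencing f d Z) : OccursIn d Z := by
  by_contra hc
  exact not_influencing_of_fresh hperm hpeek hc h

/-! ### Key identities for non-influencing values -/

theorem swap_eq_triple {d c e : D} (h1 : d ≠ c) (h2 : d ≠ e) (h3 : c ≠ e) :
    Equiv.swap d c =
      (Equiv.swap d e).trans ((Equiv.swap c e).trans (Equiv.swap d e)) := by
  ext x
  simp only [Equiv.trans_apply]
  rcases eq_or_ne x d with rfl | hxd
  · rw [Equiv.swap_apply_left, Equiv.swap_apply_left, Equiv.swap_apply_right,
      Equiv.swap_apply_of_ne_of_ne h1.symm h3]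
  · rcases eq_or_ne x c with rfl | hxc
    · rw [Equiv.swap_apply_right, Equiv.swap_apply_of_ne_of_ne h1.symm h3,
        Equiv.swap_apply_left, Equiv.swap_apply_right]
    · rcases eq_or_ne x e with rfl | hxe
      · rw [Equiv.swap_apply_of_ne_of_ne h2.symm h3.symm, Equiv.swap_apply_right,
          Equiv.swap_apply_of_ne_of_ne h1 h2, Equiv.swap_apply_left]
      · rw [Equiv.swap_apply_of_ne_of_ne hxd hxc, Equiv.swap_apply_of_ne_of_ne hxd hxe,
          Equiv.swap_apply_of_ne_of_ne hxc hxe, Equiv.swap_apply_of_ne_of_ne hxd hxe]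

theorem lf_swap_one {f : Transduction A G D} (hperm : PermInvariant f)
    {Z : DataWord A D} {d c : D}
    (hm : ¬ Memorable f d Z) (hc : ¬ OccursIn c Z) (Y : DataWord A D) :
    leftFac f Z (permW (Equiv.swap d c) Y) =
      permFO (Equiv.swap d c) (leftFac f Z Y) := by
  by_cases hdc : d = c
  · subst hdc
    rw [Equiv.swap_self, permW_refl, permFO_refl]
  · have hrepl : permW (Equiv.swap d c) Z = replaceD Z d c := by
      rw [replaceD_eq_permW_swap hc]
    have key := leftFac_perm hperm (Equiv.swap d c) Z Y
    rw [hrepl] at key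
    rw [← key]
    by_contra hne
    exact hm ⟨permW (Equiv.swap d c) Y, c, safeRepl_of_fresh hc, fun h => hne h.symm⟩

theorem lf_swap_two [Infinite D] {f : Transduction A G D} (hperm : PermInvariant f)
    {Z : DataWord A D} {d c : D}
    (hmd : ¬ Memorable f d Z) (hmc : ¬ Memorable f c Z) (Y : DataWord A D) :
    leftFac f Z (permW (Equiv.swap d c) Y) =
      permFO (Equiv.swap d c) (leftFac f Z Y) := by
  by_cases hdc : d = c
  · subst hdc
    rw [Equiv.swap_self, permW_refl, permFO_refl]
  · obtain ⟨e, he⟩ := exists_fresh (d :: c :: vals Z)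
    have hed : d ≠ e := fun hc2 => he (by rw [← hc2]; exact List.mem_cons_self)
    have hec : c ≠ e := fun hc2 => he (by rw [← hc2]; simp)
    have heZ : ¬ OccursIn e Z := fun hc2 => he (by
      simp [occursIn_iff_mem_vals.1 hc2])
    rw [swap_eq_triple hdc hed hec]
    have hw : permW ((Equiv.swap d e).trans ((Equiv.swap c e).trans (Equiv.swap d e))) Y =
        permW (Equiv.swap d e) (permW (Equiv.swap c e) (permW (Equiv.swap d e) Y)) := by
      rw [permW_permW, permW_permW]
    rw [hw, lf_swap_one hperm hmd heZ, lf_swap_one hperm hmc heZ,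
      lf_swap_one hperm hmd heZ, permFO_permFO, permFO_permFO]

theorem rf_replace_of_not_vul {f : Transduction A G D} {Z : DataWord A D} {d e : D}
    (hv : ¬ Vulnerable f d Z) {Y : DataWord A D}
    (he : ¬ OccursIn e (Z ++ Y)) : rightFac f Z (replaceD Y d e) = rightFac f Z Y := by
  by_contra hne
  apply hv
  refine ⟨[], Y, e, ?_, ?_, ?_⟩
  · rintro ⟨p, hp, _⟩
    exact absurd hp List.not_mem_nil
  · exact safeRepl_of_fresh (by simpa using he)
  · rw [List.append_nil]
    exact hne

theorem not_occurs_permW_swap {Y : DataWord A D} {d c x : D}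
    (hx : ¬ OccursIn x Y) (hxd : x ≠ d) (hxc : x ≠ c) :
    ¬ OccursIn x (permW (Equiv.swap d c) Y) := by
  intro hc2
  apply hx
  have hfix : Equiv.swap d c x = x := Equiv.swap_apply_of_ne_of_ne hxd hxc
  rw [← hfix] at hc2
  exact occursIn_permW.1 hc2

theorem not_occurs_replaceD {Y : DataWord A D} {a b x : D}
    (hx : ¬ OccursIn x Y) (hxb : x ≠ b) : ¬ OccursIn x (replaceD Y a b) := by
  rintro ⟨p, hp, hpx⟩
  rw [replaceD_eq_valMap] at hp
  obtain ⟨q, hq, he⟩ := List.mem_map.1 hp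
  by_cases hqa : q.2 = a
  · apply hxb
    rw [← hpx, ← he]
    simp [hqa]
  · apply hx
    refine ⟨q, hq, ?_⟩
    rw [← hpx, ← he]
    simp [hqa]

theorem swap_replace_fun {d c e e' : D} (hdc : d ≠ c) (hed : e ≠ d) (hec : e ≠ c)
    (he'e : e' ≠ e) (he'd : e' ≠ d) (he'c : e' ≠ c) (x : D) (hxe : x ≠ e)
    (hxe' : x ≠ e') :
    (if (if Equiv.swap d c x = d then e else Equiv.swap d c x) = c then e'
      else (if Equiv.swap d c x = d then e else Equiv.swap d c x)) =
    (if (if x = d then e' else x) = c then e else (if x = d then e' else x)) := by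
  rcases eq_or_ne x d with rfl | hxd
  · rw [Equiv.swap_apply_left]
    split_ifs <;> simp_all
  · rcases eq_or_ne x c with rfl | hxc
    · rw [Equiv.swap_apply_right]
      split_ifs <;> simp_all
    · rw [Equiv.swap_apply_of_ne_of_ne hxd hxc]
      split_ifs <;> simp_all

theorem rf_swap_two [Infinite D] {f : Transduction A G D} {Z : DataWord A D}
    {d c : D} (hvd : ¬ Vulnerable f d Z) (hvc : ¬ Vulnerable f c Z)
    (Y : DataWord A D) :
    rightFac f Z (permW (Equiv.swap d c) Y) = rightFac f Z Y := by
  by_cases hdc : d = c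
  · subst hdc
    rw [Equiv.swap_self, permW_refl]
  · obtain ⟨e, he⟩ := exists_fresh (d :: c :: (vals Z ++ vals Y))
    obtain ⟨e'', he''⟩ := exists_fresh (e :: d :: c :: (vals Z ++ vals Y))
    have hed : e ≠ d := fun h => he (by rw [h]; simp)
    have hec : e ≠ c := fun h => he (by rw [h]; simp)
    have heZ : ¬ OccursIn e Z := fun h => he (by
      simp [occursIn_iff_mem_vals.1 h])
    have heY : ¬ OccursIn e Y := fun h => he (by
      simp [occursIn_iff_mem_vals.1 h])
    have he'e : e'' ≠ e := fun h => he'' (by rw [h]; simp)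
    have he'd : e'' ≠ d := fun h => he'' (by rw [h]; simp)
    have he'c : e'' ≠ c := fun h => he'' (by rw [h]; simp)
    have he'Z : ¬ OccursIn e'' Z := fun h => he'' (by
      simp [occursIn_iff_mem_vals.1 h])
    have he'Y : ¬ OccursIn e'' Y := fun h => he'' (by
      simp [occursIn_iff_mem_vals.1 h])
    set τ := Equiv.swap d c with hτ
    have hτY : ¬ OccursIn e (permW τ Y) := not_occurs_permW_swap heY hed hec
    have hword : replaceD (replaceD (permW τ Y) d e) c e'' =
        replaceD (replaceD Y d e'') c e := by
      rw [replaceD_eq_valMap, replaceD_eq_valMap, replaceD_eq_valMap,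
        replaceD_eq_valMap, permW_eq_valMap, valMap_valMap, valMap_valMap,
        valMap_valMap]
      apply valMap_congr
      intro x hx
      have hxe : x ≠ e := fun h => heY (occursIn_iff_mem_vals.2 (h ▸ hx))
      have hxe' : x ≠ e'' := fun h => he'Y (occursIn_iff_mem_vals.2 (h ▸ hx))
      simp only [Function.comp]
      exact swap_replace_fun hdc hed hec he'e he'd he'c x hxe hxe'
    have h1 : ¬ OccursIn e (Z ++ permW τ Y) := by
      rw [occursIn_append]
      rintro (h | h)
      · exact heZ h
      · exact hτY h
    have h2 : ¬ OccursIn e'' (Z ++ replaceD (permW τ Y) d e) := by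
      rw [occursIn_append]
      rintro (h | h)
      · exact he'Z h
      · exact not_occurs_replaceD (not_occurs_permW_swap he'Y he'd he'c) he'e h
    have h3 : ¬ OccursIn e (Z ++ replaceD Y d e'') := by
      rw [occursIn_append]
      rintro (h | h)
      · exact heZ h
      · exact not_occurs_replaceD heY (Ne.symm he'e) h
    have h4 : ¬ OccursIn e'' (Z ++ Y) := by
      rw [occursIn_append]
      rintro (h | h)
      · exact he'Z h
      · exact he'Y h
    calc rightFac f Z (permW τ Y)
        = rightFac f Z (replaceD (permW τ Y) d e) :=
          (rf_replace_of_not_vul hvd h1).symm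
      _ = rightFac f Z (replaceD (replaceD (permW τ Y) d e) c e'') :=
          (rf_replace_of_not_vul hvc h2).symm
      _ = rightFac f Z (replaceD (replaceD Y d e'') c e) := by rw [hword]
      _ = rightFac f Z (replaceD Y d e'') := rf_replace_of_not_vul hvc h3
      _ = rightFac f Z Y := rf_replace_of_not_vul hvd h4

/-! ### Normalised forms of memorability and vulnerability -/

theorem permW_swap_replaceD {v : DataWord A D} {a d' b : D}
    (hd' : ¬ OccursIn d' v) (hb : ¬ OccursIn b v) :
    permW (Equiv.swap d' b) (replaceD v a d') = replaceD v a b := by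
  rw [replaceD_eq_valMap, replaceD_eq_valMap, permW_eq_valMap, valMap_valMap]
  apply valMap_congr
  intro x hx
  simp only [Function.comp]
  by_cases hxa : x = a
  · rw [if_pos hxa, if_pos hxa, Equiv.swap_apply_left]
  · rw [if_neg hxa, if_neg hxa, Equiv.swap_apply_of_ne_of_ne
      (fun h => hd' (occursIn_iff_mem_vals.2 (by rw [← h]; exact hx)))
      (fun h => hb (occursIn_iff_mem_vals.2 (by rw [← h]; exact hx)))]

theorem swap_trans_self (a b : D) :
    (Equiv.swap a b).trans (Equiv.swap a b) = Equiv.refl D := by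
  ext x
  simp

theorem memorable_iff_swap [Infinite D] {f : Transduction A G D}
    (hperm : PermInvariant f) {a b : D} {W : DataWord A D}
    (hb : ¬ OccursIn b W) :
    Memorable f a W ↔
      ∃ v, permFO (Equiv.swap a b) (leftFac f W (permW (Equiv.swap a b) v)) ≠
        leftFac f W v := by
  have hkey : ∀ v, permFO (Equiv.swap a b) (leftFac f W (permW (Equiv.swap a b) v)) =
      leftFac f (replaceD W a b) v := by
    intro v
    have h1 := leftFac_perm hperm (Equiv.swap a b) W (permW (Equiv.swap a b) v)
    rw [permW_permW, swap_trans_self, permW_refl] at h1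
    rw [← h1, replaceD_eq_permW_swap hb]
  constructor
  · rintro ⟨v, d', hs, hne⟩
    have ha : OccursIn a W := (occurs_of_leftFac_replace_ne hne).1
    have hd'a : d' ≠ a := (occurs_of_leftFac_replace_ne hne).2
    have hd'W : ¬ OccursIn d' W := not_occurs_of_safeRepl hs ha hd'a
    by_cases hd'b : d' = b
    · subst hd'b
      exact ⟨v, by rw [hkey v]; exact hne⟩
    · set σ := Equiv.swap d' b with hσ
      refine ⟨permW σ v, ?_⟩
      rw [hkey]
      have e1 : permW σ (replaceD W a d') = replaceD W a b :=
        permW_swap_replaceD hd'W hb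
      have e2 : permW σ W = W := permW_swap_of_fresh hd'W hb
      intro hcon
      apply hne
      have h3 : leftFac f (replaceD W a b) (permW σ v) =
          permFO σ (leftFac f (replaceD W a d') v) := by
        rw [← e1]
        exact leftFac_perm hperm σ _ v
      have h4 : leftFac f W (permW σ v) = permFO σ (leftFac f W v) := by
        conv_lhs => rw [← e2]
        exact leftFac_perm hperm σ W v
      rw [h3, h4] at hcon
      exact permFO_injective σ hcon
  · rintro ⟨v, hne⟩
    rw [hkey v] at hne
    by_cases hab : a = b
    · exact absurd (by rw [hab, replaceD_self]) hne
    · exact ⟨v, b, safeRepl_of_fresh hb, hne⟩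

theorem vulnerable_iff_fresh [Infinite D] {f : Transduction A G D}
    (hperm : PermInvariant f) (L : List D) {a : D} {W : DataWord A D} :
    Vulnerable f a W ↔
      ∃ u' v b, b ∉ L ∧ ¬ OccursIn b (W ++ u' ++ v) ∧ b ≠ a ∧ ¬ OccursIn a u' ∧
        rightFac f (W ++ u') (replaceD v a b) ≠ rightFac f (W ++ u') v := by
  constructor
  · rintro ⟨u', v, d', hocc, hs, hne⟩
    have hav : OccursIn a v := by
      by_contra h
      exact hne (by rw [replaceD_of_not_occurs d' h])
    have hd'a : d' ≠ a := by
      rintro rfl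
      exact hne (by rw [replaceD_self])
    have haw : OccursIn a (W ++ u' ++ v) := occursIn_append.2 (Or.inr hav)
    have hd'w : ¬ OccursIn d' (W ++ u' ++ v) := not_occurs_of_safeRepl hs haw hd'a
    obtain ⟨b, hbL0⟩ := exists_fresh (a :: d' :: (L ++ (vals W ++ vals u' ++ vals v)))
    simp only [List.mem_cons, List.mem_append, not_or] at hbL0
    obtain ⟨hba, hbd', hbL, ⟨hbWv, hbuv⟩, hbvv⟩ := hbL0
    have hbW : ¬ OccursIn b (W ++ u' ++ v) := by
      rw [occursIn_append, occursIn_append]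
      rintro ((h | h) | h)
      · exact hbWv (occursIn_iff_mem_vals.1 h)
      · exact hbuv (occursIn_iff_mem_vals.1 h)
      · exact hbvv (occursIn_iff_mem_vals.1 h)
    refine ⟨u', v, b, hbL, hbW, hba, hocc, ?_⟩
    by_cases hd'b : d' = b
    · rw [← hd'b]; exact hne
    · set σ := Equiv.swap d' b with hσ
      have hd'Wu : ¬ OccursIn d' (W ++ u') :=
        fun h => hd'w (occursIn_append.2 (Or.inl h))
      have hbWu : ¬ OccursIn b (W ++ u') :=
        fun h => hbW (occursIn_append.2 (Or.inl h))
      have hd'v : ¬ OccursIn d' v :=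
        fun h => hd'w (occursIn_append.2 (Or.inr h))
      have hbv : ¬ OccursIn b v :=
        fun h => hbW (occursIn_append.2 (Or.inr h))
      have e1 : permW σ (W ++ u') = W ++ u' := permW_swap_of_fresh hd'Wu hbWu
      have e2 : permW σ (replaceD v a d') = replaceD v a b :=
        permW_swap_replaceD hd'v hbv
      have e3 : permW σ v = v := permW_swap_of_fresh hd'v hbv
      intro hcon
      apply hne
      have h3 : rightFac f (W ++ u') (replaceD v a b) =
          permFO σ (rightFac f (W ++ u') (replaceD v a d')) := by
        conv_lhs => rw [← e1, ← e2]
        exact rightFac_perm hperm σ _ _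
      have h4 : rightFac f (W ++ u') v = permFO σ (rightFac f (W ++ u') v) := by
        conv_lhs => rw [← e1, ← e3]
        exact rightFac_perm hperm σ _ _
      rw [h3, h4] at hcon
      exact permFO_injective σ hcon
  · rintro ⟨u', v, b, _, hbW, hba, hocc, hne⟩
    exact ⟨u', v, b, hocc, safeRepl_of_fresh hbW, hne⟩

/-! ### Reconstruction of the fine factorisation from its two projections -/

def blocks : List (FOElem G D) → List (List (FOElem G D))
  | [] => []
  | e :: t =>
    if e.isTri then (e :: t.takeWhile (·.isTri)) :: blocks (t.dropWhile (·.isTri))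
    else blocks t
termination_by l => l.length
decreasing_by
  · exact Nat.lt_succ_of_le ((List.dropWhile_sublist _).length_le)
  · exact Nat.lt_succ_self _

theorem blocks_nil : blocks ([] : List (FOElem G D)) = [] := by rw [blocks]

theorem blocks_cons_tri {e : FOElem G D} (h : e.isTri = true) (t : List (FOElem G D)) :
    blocks (e :: t) =
      (e :: t.takeWhile (·.isTri)) :: blocks (t.dropWhile (·.isTri)) := by
  rw [blocks, if_pos h]

theorem blocks_cons_not {e : FOElem G D} (h : ¬ e.isTri = true)
    (t : List (FOElem G D)) : blocks (e :: t) = blocks t := by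
  rw [blocks, if_neg h]

def recon (bs : List (List (FOElem G D))) : List (FOElem G D) → ℕ → List (FOElem G D)
  | [], _ => []
  | .left :: p, k => bs.getD k [] ++ recon bs p (k + 1)
  | .middle :: p, k => .middle :: recon bs p k
  | .right :: p, k => .right :: recon bs p k
  | .tri g d o :: p, k => .tri g d o :: recon bs p k

theorem recon_shift (bs : List (List (FOElem G D))) (b : List (FOElem G D)) :
    ∀ (p : List (FOElem G D)) (k : ℕ), recon (b :: bs) p (k + 1) = recon bs p k := by
  intro p
  induction p with
  | nil => intro k; rfl
  | cons e p ih =>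
    intro k
    cases e with
    | left => rw [recon, recon, List.getD_cons_succ, ih]
    | middle => rw [recon, recon, ih]
    | right => rw [recon, recon, ih]
    | tri g d o => rw [recon, recon, ih]

theorem recon_emit (bs : List (List (FOElem G D))) :
    ∀ (gp p : List (FOElem G D)) (k : ℕ), (∀ x ∈ gp, x ≠ FOElem.left) →
      recon bs (gp ++ p) k = gp ++ recon bs p k := by
  intro gp
  induction gp with
  | nil => intro p k _; rfl
  | cons e gp ih =>
    intro p k hgp
    have he : e ≠ FOElem.left := hgp e (by simp)
    cases e with
    | left => exact absurd rfl he
    | middle =>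
      rw [List.cons_append, recon, ih p k (fun x hx => hgp x (by simp [hx]))]
      rfl
    | right =>
      rw [List.cons_append, recon, ih p k (fun x hx => hgp x (by simp [hx]))]
      rfl
    | tri g d o =>
      rw [List.cons_append, recon, ih p k (fun x hx => hgp x (by simp [hx]))]
      rfl

/-- classification of fine elements -/
def pA (n : ℤ) : FOElem G D → Bool
  | .tri _ _ o => decide (o ≤ n)
  | _ => false

theorem pA_true_facts {n : ℤ} {e : FOElem G D} (hsh : e.isTri = true ∨ e = .right)
    (h : pA n e = true) :
    e.isTri = true ∧ toRightGT n e = e ∧ toLeftLE n e = FOElem.left := by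
  cases e with
  | tri g d o =>
    simp only [pA, decide_eq_true_eq] at h
    refine ⟨rfl, ?_, ?_⟩
    · show (if n < o then FOElem.right else .tri g d o) = .tri g d o
      rw [if_neg (by omega)]
    · show (if o ≤ n then FOElem.left else .tri g d o) = FOElem.left
      rw [if_pos h]
  | left => simp [pA] at h
  | middle => simp [pA] at h
  | right => simp [pA] at h

theorem pA_false_facts {n : ℤ} {e : FOElem G D} (hsh : e.isTri = true ∨ e = .right)
    (h : ¬ pA n e = true) :
    toRightGT n e = FOElem.right ∧ toLeftLE n e = e ∧ e ≠ FOElem.left := by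
  cases e with
  | tri g d o =>
    simp only [pA, decide_eq_true_eq] at h
    refine ⟨?_, ?_, by simp⟩
    · show (if n < o then FOElem.right else .tri g d o) = .right
      rw [if_pos (by omega)]
    · show (if o ≤ n then FOElem.left else .tri g d o) = .tri g d o
      rw [if_neg h]
  | left =>
    rcases hsh with h2 | h2
    · simp [FOElem.isTri] at h2
    · simp at h2
  | middle =>
    rcases hsh with h2 | h2
    · simp [FOElem.isTri] at h2
    · simp at h2
  | right => exact ⟨rfl, rfl, by simp⟩

theorem isMark_false_of_isTri {e : FOElem G D} (h : e.isTri = true) :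
    e.isMark = false := by
  simp [FOElem.isMark, h]

theorem dropWhile_head_not {α : Type} (q : α → Bool) :
    ∀ (l : List α), ∀ y ∈ (l.dropWhile q).head?, q y = false := by
  intro l
  induction l with
  | nil => intro y hy; simp at hy
  | cons x l ih =>
    intro y hy
    rw [List.dropWhile_cons] at hy
    by_cases hq : q x = true
    · rw [if_pos hq] at hy
      exact ih y hy
    · rw [if_neg hq] at hy
      simp only [List.head?_cons, Option.mem_def, Option.some.injEq] at hy
      rw [← hy]
      exact Bool.not_eq_true _ ▸ (by simpa using hq)

theorem takeWhile_append_all {α : Type} (q : α → Bool) :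
    ∀ (gp rest : List α), (∀ x ∈ gp, q x = true) →
      (∀ y ∈ rest.head?, q y = false) →
      (gp ++ rest).takeWhile q = gp ∧ (gp ++ rest).dropWhile q = rest := by
  intro gp
  induction gp with
  | nil =>
    intro rest _ hrest
    cases rest with
    | nil => exact ⟨rfl, rfl⟩
    | cons y r =>
      have hy : q y = false := hrest y (by simp)
      rw [List.nil_append, List.takeWhile_cons, List.dropWhile_cons, if_neg (by simp [hy]),
        if_neg (by simp [hy])]
      exact ⟨rfl, rfl⟩
  | cons x gp ih =>
    intro rest hgp hrest
    have hx : q x = true := hgp x (by simp)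
    obtain ⟨h1, h2⟩ := ih rest (fun z hz => hgp z (by simp [hz])) hrest
    rw [List.cons_append, List.takeWhile_cons, List.dropWhile_cons, if_pos hx, if_pos hx,
      h1, h2]
    exact ⟨rfl, rfl⟩

theorem collapse_append_tris {gp X : List (FOElem G D)}
    (h : ∀ x ∈ gp, x.isMark = false) :
    collapse (gp ++ X) = gp ++ collapse X := by
  induction gp with
  | nil => rfl
  | cons x gp ih =>
    rw [List.cons_append, collapse_cons_of_not_mark (by simp [h x (by simp)]),
      ih (fun z hz => h z (by simp [hz])), List.cons_append]

theorem collapse_cons_of_head_ne {m : FOElem G D} {X : List (FOElem G D)}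
    (h : ∀ y ∈ X.head?, ¬(m = y)) : collapse (m :: X) = m :: collapse X := by
  rw [collapse_cons]
  cases X with
  | nil => rfl
  | cons y X' =>
    obtain ⟨tt, htt⟩ := collapse_head y X'
    rw [htt, consColl, if_neg (fun hc => h y (by simp) hc.1)]

theorem blocks_tris_append {blk X : List (FOElem G D)} (hne : blk ≠ [])
    (hblk : ∀ x ∈ blk, x.isTri = true) (hX : ∀ y ∈ X.head?, y.isTri = false) :
    blocks (blk ++ X) = blk :: blocks X := by
  cases blk with
  | nil => exact absurd rfl hne
  | cons e bl =>
    rw [List.cons_append, blocks_cons_tri (hblk e (by simp))]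
    obtain ⟨h1, h2⟩ := takeWhile_append_all (·.isTri) bl X
      (fun x hx => hblk x (by simp [hx])) hX
    rw [h1, h2]

theorem recon_fine (n : ℤ) : ∀ (N : ℕ) (w : List (FOElem G D)), w.length ≤ N →
    (∀ e ∈ w, e.isTri = true ∨ e = .right) → w.Chain' NAdj →
    recon (blocks (collapse (List.map (toRightGT n) w)))
      (collapse (List.map (toLeftLE n) w)) 0 = w := by
  intro N
  induction N with
  | zero =>
    intro w hlen _ _
    have hnil : w = [] := List.eq_nil_of_length_eq_zero (Nat.le_zero.1 hlen)
    subst hnil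
    rfl
  | succ N ih =>
    intro w hlen hsh hch
    cases w with
    | nil => rfl
    | cons e t =>
      by_cases hA : pA n e = true
      · obtain ⟨htri, hBe, hLe⟩ := pA_true_facts (hsh e (by simp)) hA
        set blk := e :: t.takeWhile (pA n) with hblk
        set t' := t.dropWhile (pA n) with ht'
        have hw : (e :: t : List (FOElem G D)) = blk ++ t' := by
          rw [hblk, ht', List.cons_append, List.takeWhile_append_dropWhile]
        have hblkmem : ∀ x ∈ blk, pA n x = true := by
          intro x hx
          rcases List.mem_cons.1 hx with rfl | hx
          · exact hA
          · exact List.mem_takeWhile_imp hx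
        have hblksh : ∀ x ∈ blk, x.isTri = true ∨ x = .right := fun x hx =>
          hsh x (by rw [hw]; exact List.mem_append.2 (Or.inl hx))
        have hblktri : ∀ x ∈ blk, x.isTri = true := fun x hx =>
          (pA_true_facts (hblksh x hx) (hblkmem x hx)).1
        have ht'sh : ∀ x ∈ t', x.isTri = true ∨ x = .right := fun x hx =>
          hsh x (by rw [hw]; exact List.mem_append.2 (Or.inr hx))
        have ht'ch : t'.Chain' NAdj := by
          have hc2 := hch
          rw [hw] at hc2
          exact (List.isChain_append.1 hc2).2.1
        have ht'head : ∀ y ∈ t'.head?, pA n y = false := by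
          rw [ht']
          exact dropWhile_head_not (pA n) t
        have ht'len : t'.length ≤ N := by
          have h1 : t'.length ≤ t.length := (List.dropWhile_sublist _).length_le
          have h2 : (e :: t).length = t.length + 1 := rfl
          omega
        have hmapB : List.map (toRightGT n) (blk ++ t') =
            blk ++ List.map (toRightGT n) t' := by
          rw [List.map_append]
          congr 1
          have hid : List.map (toRightGT n) blk = List.map id blk :=
            List.map_congr_left fun x hx =>
              (pA_true_facts (hblksh x hx) (hblkmem x hx)).2.1
          rw [hid, List.map_id]
        have hP1 : collapse (List.map (toRightGT n) (blk ++ t')) =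
            blk ++ collapse (List.map (toRightGT n) t') := by
          rw [hmapB,
            collapse_append_tris (fun x hx => isMark_false_of_isTri (hblktri x hx))]
        have hXhead : ∀ y ∈ (collapse (List.map (toRightGT n) t')).head?,
            y.isTri = false := by
          intro y hy
          cases t'c : t' with
          | nil => rw [t'c] at hy; simp [collapse] at hy
          | cons z t'' =>
            have hz : pA n z = false := by
              have := ht'head z (by rw [t'c]; simp)
              exact this
            have hzsh := ht'sh z (by rw [t'c]; simp)
            have hBz : toRightGT n z = .right := (pA_false_facts hzsh (by simp [hz])).1
            rw [t'c, List.map_cons] at hy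
            obtain ⟨tt, htt⟩ := collapse_head (toRightGT n z) (List.map (toRightGT n) t'')
            rw [htt] at hy
            simp only [List.head?_cons, Option.mem_def, Option.some.injEq] at hy
            rw [← hy, hBz]
            rfl
        have hblocks : blocks (collapse (List.map (toRightGT n) (blk ++ t'))) =
            blk :: blocks (collapse (List.map (toRightGT n) t')) := by
          rw [hP1]
          exact blocks_tris_append (by rw [hblk]; simp) hblktri hXhead
        have hmapA : ∀ x ∈ List.map (toLeftLE n) blk, x = FOElem.left := by
          intro x hx
          obtain ⟨z, hz, he2⟩ := List.mem_map.1 hx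
          rw [← he2, (pA_true_facts (hblksh z hz) (hblkmem z hz)).2.2]
        have hP2 : collapse (List.map (toLeftLE n) (blk ++ t')) =
            FOElem.left :: collapse (List.map (toLeftLE n) t') := by
          rw [List.map_append,
            collapse_const_append FOElem.left rfl _ _ hmapA (by rw [hblk]; simp)]
          apply collapse_cons_of_head_ne
          intro y hy
          rw [List.head?_map] at hy
          cases t'c : t' with
          | nil => rw [t'c] at hy; simp at hy
          | cons z t'' =>
            rw [t'c] at hy
            simp only [List.head?_cons, Option.map_some, Option.mem_def,
              Option.some.injEq] at hy
            have hz : pA n z = false := ht'head z (by rw [t'c]; simp)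
            have hzsh := ht'sh z (by rw [t'c]; simp)
            have hzf := pA_false_facts hzsh (by simp [hz] : ¬ pA n z = true)
            rw [← hy, hzf.2.1]
            exact fun hc => hzf.2.2 hc.symm
        rw [hw, hblocks, hP2, recon, List.getD_cons_zero, recon_shift,
          ih t' ht'len ht'sh ht'ch]
      · set gp := e :: t.takeWhile (fun x => !pA n x) with hgp
        set t' := t.dropWhile (fun x => !pA n x) with ht'
        have hw : (e :: t : List (FOElem G D)) = gp ++ t' := by
          rw [hgp, ht', List.cons_append, List.takeWhile_append_dropWhile]
        have hgpmem : ∀ x ∈ gp, pA n x = false := by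
          intro x hx
          rcases List.mem_cons.1 hx with rfl | hx
          · simpa using hA
          · simpa using List.mem_takeWhile_imp hx
        have hgpsh : ∀ x ∈ gp, x.isTri = true ∨ x = .right := fun x hx =>
          hsh x (by rw [hw]; exact List.mem_append.2 (Or.inl hx))
        have hgpfacts : ∀ x ∈ gp, toRightGT n x = FOElem.right ∧
            toLeftLE n x = x ∧ x ≠ FOElem.left :=
          fun x hx => pA_false_facts (hgpsh x hx) (by simp [hgpmem x hx])
        have ht'sh : ∀ x ∈ t', x.isTri = true ∨ x = .right := fun x hx =>
          hsh x (by rw [hw]; exact List.mem_append.2 (Or.inr hx))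
        have ht'ch : t'.Chain' NAdj := by
          have hc2 := hch
          rw [hw] at hc2
          exact (List.isChain_append.1 hc2).2.1
        have hgpch : gp.Chain' NAdj := by
          have hc2 := hch
          rw [hw] at hc2
          exact (List.isChain_append.1 hc2).1
        have ht'head : ∀ y ∈ t'.head?, pA n y = true := by
          intro y hy
          have := dropWhile_head_not (fun x => !pA n x) t y (by rw [← ht']; exact hy)
          simpa using this
        have ht'len : t'.length ≤ N := by
          have h1 : t'.length ≤ t.length := (List.dropWhile_sublist _).length_le
          have h2 : (e :: t).length = t.length + 1 := rfl
          omega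
        have hmapA : List.map (toLeftLE n) gp = gp := by
          have hid : List.map (toLeftLE n) gp = List.map id gp :=
            List.map_congr_left fun x hx => (hgpfacts x hx).2.1
          rw [hid, List.map_id]
        have hP2 : collapse (List.map (toLeftLE n) (gp ++ t')) =
            gp ++ collapse (List.map (toLeftLE n) t') := by
          rw [List.map_append, hmapA]
          apply collapse_append_chain' gp _ hgpch
          intro a ha b hb
          rw [List.head?_map] at hb
          cases t'c : t' with
          | nil => rw [t'c] at hb; simp at hb
          | cons z t'' =>
            rw [t'c] at hb
            simp only [List.head?_cons, Option.map_some, Option.mem_def,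
              Option.some.injEq] at hb
            have hz := ht'head z (by rw [t'c]; simp)
            have hzsh := ht'sh z (by rw [t'c]; simp)
            rw [← hb, (pA_true_facts hzsh hz).2.2]
            rintro ⟨haeq, _⟩
            exact (hgpfacts a (List.mem_of_getLast? ha)).2.2 haeq
        have hmapBall : ∀ x ∈ List.map (toRightGT n) gp, x = FOElem.right := by
          intro x hx
          obtain ⟨z, hz, he2⟩ := List.mem_map.1 hx
          rw [← he2, (hgpfacts z hz).1]
        have hP1 : collapse (List.map (toRightGT n) (gp ++ t')) =
            FOElem.right :: collapse (List.map (toRightGT n) t') := by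
          rw [List.map_append,
            collapse_const_append FOElem.right rfl _ _ hmapBall (by rw [hgp]; simp)]
          apply collapse_cons_of_head_ne
          intro y hy
          rw [List.head?_map] at hy
          cases t'c : t' with
          | nil => rw [t'c] at hy; simp at hy
          | cons z t'' =>
            rw [t'c] at hy
            simp only [List.head?_cons, Option.map_some, Option.mem_def,
              Option.some.injEq] at hy
            have hz := ht'head z (by rw [t'c]; simp)
            have hzsh := ht'sh z (by rw [t'c]; simp)
            rw [← hy, (pA_true_facts hzsh hz).2.1]
            intro hc
            have := (pA_true_facts hzsh hz).1
            rw [← hc] at this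
            simp [FOElem.isTri] at this
        rw [hw, hP1, blocks_cons_not (by simp [FOElem.isTri]), hP2,
          recon_emit _ gp _ 0 (fun x hx => (hgpfacts x hx).2.2),
          ih t' ht'len ht'sh ht'ch]

theorem fine_eq_of_projections (n : ℤ) {w1 w2 : List (FOElem G D)}
    (hsh1 : ∀ e ∈ w1, e.isTri = true ∨ e = .right)
    (hsh2 : ∀ e ∈ w2, e.isTri = true ∨ e = .right)
    (hch1 : w1.Chain' NAdj) (hch2 : w2.Chain' NAdj)
    (hP1 : collapse (List.map (toRightGT n) w1) = collapse (List.map (toRightGT n) w2))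
    (hP2 : collapse (List.map (toLeftLE n) w1) = collapse (List.map (toLeftLE n) w2)) :
    w1 = w2 := by
  rw [← recon_fine n w1.length w1 le_rfl hsh1 hch1, hP1, hP2,
    recon_fine n w2.length w2 le_rfl hsh2 hch2]

/-! ### The fine factorisation is determined by its two projections -/

theorem rightFac_shape (f : Transduction A G D) (U V : DataWord A D) :
    ∀ e ∈ rightFac f U V, e.isTri = true ∨ e = .right := by
  intro e he
  rw [rightFac_eq] at he
  obtain ⟨t, _, hmr⟩ := List.mem_map.1 (mem_of_mem_collapse he)
  rw [← hmr]
  unfold markR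
  split
  · exact Or.inr rfl
  · exact Or.inl rfl

theorem rightFac_chain' (f : Transduction A G D) (U V : DataWord A D) :
    (rightFac f U V).Chain' NAdj := by
  rw [rightFac_eq]
  exact collapse_chain' _

theorem rf_fine_iff (f : Transduction A G D) (Z M V1 V2 : DataWord A D) :
    rightFac f (Z ++ M) V1 = rightFac f (Z ++ M) V2 ↔
      (rightFac f Z (M ++ V1) = rightFac f Z (M ++ V2) ∧
        tFac f Z M V1 = tFac f Z M V2) := by
  constructor
  · intro h
    exact ⟨by rw [rightFac_append f Z M V1, rightFac_append f Z M V2, h],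
      by rw [tFac, tFac, h]⟩
  · rintro ⟨h1, h2⟩
    refine fine_eq_of_projections (Z.length : ℤ) (rightFac_shape f _ _)
      (rightFac_shape f _ _) (rightFac_chain' f _ _) (rightFac_chain' f _ _) ?_ ?_
    · rw [← rightFac_append, ← rightFac_append]
      exact h1
    · exact h2

theorem toRightGT_pfo (n : ℤ) (π : Equiv.Perm D) (e : FOElem G D) :
    toRightGT n (pfo π e) = pfo π (toRightGT n e) := by
  cases e with
  | tri g d o =>
    show (if n < o then FOElem.right else .tri g (π d) o) =
      pfo π (if n < o then FOElem.right else .tri g d o)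
    split <;> rfl
  | left => rfl
  | middle => rfl
  | right => rfl

theorem toLeftLE_pfo (n : ℤ) (π : Equiv.Perm D) (e : FOElem G D) :
    toLeftLE n (pfo π e) = pfo π (toLeftLE n e) := by
  cases e with
  | tri g d o =>
    show (if o ≤ n then FOElem.left else .tri g (π d) o) =
      pfo π (if o ≤ n then FOElem.left else .tri g d o)
    split <;> rfl
  | left => rfl
  | middle => rfl
  | right => rfl

theorem collapse_map_permFO {h : FOElem G D → FOElem G D} (π : Equiv.Perm D)
    (hcomm : ∀ e, h (pfo π e) = pfo π (h e)) (X : List (FOElem G D)) :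
    collapse (List.map h (permFO π X)) = permFO π (collapse (List.map h X)) := by
  rw [permFO_eq_map, List.map_map]
  have h2 : List.map (h ∘ pfo π) X = List.map (pfo π ∘ h) X :=
    List.map_congr_left fun e _ => hcomm e
  rw [h2, ← List.map_map, ← permFO_eq_map, collapse_permFO]

theorem rf_core_swap [Infinite D] {f : Transduction A G D} (hperm : PermInvariant f)
    {Z : DataWord A D} {d c : D}
    (hd : ¬ Influencing f d Z) (hc : ¬ Influencing f c Z)
    (N V1 V2 : DataWord A D) :
    (rightFac f (Z ++ N) V1 = rightFac f (Z ++ N) V2) ↔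
      (rightFac f (Z ++ permW (Equiv.swap d c) N) (permW (Equiv.swap d c) V1) =
       rightFac f (Z ++ permW (Equiv.swap d c) N) (permW (Equiv.swap d c) V2)) := by
  have hmd : ¬ Memorable f d Z := fun h => hd (Or.inl h)
  have hvd : ¬ Vulnerable f d Z := fun h => hd (Or.inr h)
  have hmc : ¬ Memorable f c Z := fun h => hc (Or.inl h)
  have hvc : ¬ Vulnerable f c Z := fun h => hc (Or.inr h)
  rw [rf_fine_iff, rf_fine_iff]
  have hco : ∀ V : DataWord A D,
      rightFac f Z (permW (Equiv.swap d c) N ++ permW (Equiv.swap d c) V) =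
      rightFac f Z (N ++ V) := by
    intro V
    rw [← permW_append, rf_swap_two hvd hvc]
  have htf : ∀ V : DataWord A D,
      tFac f Z (permW (Equiv.swap d c) N) (permW (Equiv.swap d c) V) =
      permFO (Equiv.swap d c) (tFac f Z N V) := by
    intro V
    rw [tFac_eq_leftFac, tFac_eq_leftFac, length_permW, ← permW_append,
      lf_swap_two hperm hmd hmc,
      collapse_map_permFO (Equiv.swap d c) (toRightGT_pfo _ _)]
  rw [hco V1, hco V2, htf V1, htf V2]
  constructor
  · rintro ⟨h1, h2⟩
    exact ⟨h1, by rw [h2]⟩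
  · rintro ⟨h1, h2⟩
    exact ⟨h1, permFO_injective _ h2⟩

theorem lf_ext_swap [Infinite D] {f : Transduction A G D} (hperm : PermInvariant f)
    {Z : DataWord A D} {d c : D}
    (hmd : ¬ Memorable f d Z) (hmc : ¬ Memorable f c Z) (M Y : DataWord A D) :
    leftFac f (Z ++ permW (Equiv.swap d c) M) (permW (Equiv.swap d c) Y) =
      permFO (Equiv.swap d c) (leftFac f (Z ++ M) Y) := by
  rw [leftFac_append f Z (permW (Equiv.swap d c) M), length_permW, ← permW_append,
    lf_swap_two hperm hmd hmc,
    collapse_map_permFO (Equiv.swap d c) (toLeftLE_pfo _ _), leftFac_append f Z M Y]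

/-! ### Exchange of two non-influencing values -/

theorem swap_comm_apply {d c a b : D} (hbd : b ≠ d) (hbc : b ≠ c) (x : D) :
    Equiv.swap (Equiv.swap d c a) b (Equiv.swap d c x) =
      Equiv.swap d c (Equiv.swap a b x) := by
  have hb : Equiv.swap d c b = b := Equiv.swap_apply_of_ne_of_ne hbd hbc
  conv_lhs => rw [← hb]
  rw [Equiv.swap_apply_apply]
  simp [Equiv.Perm.mul_apply]

theorem permW_swap_comm {d c a b : D} (hbd : b ≠ d) (hbc : b ≠ c)
    (w : DataWord A D) :
    permW (Equiv.swap (Equiv.swap d c a) b) (permW (Equiv.swap d c) w) =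
      permW (Equiv.swap d c) (permW (Equiv.swap a b) w) := by
  rw [permW_permW, permW_permW]
  congr 1
  ext x
  exact swap_comm_apply hbd hbc x

theorem permFO_swap_comm {d c a b : D} (hbd : b ≠ d) (hbc : b ≠ c)
    (X : List (FOElem G D)) :
    permFO (Equiv.swap (Equiv.swap d c a) b) (permFO (Equiv.swap d c) X) =
      permFO (Equiv.swap d c) (permFO (Equiv.swap a b) X) := by
  rw [permFO_permFO, permFO_permFO]
  congr 1
  ext x
  exact swap_comm_apply hbd hbc x

theorem permW_involutive (τ : D ≃ D) (h : ∀ x, τ (τ x) = x) (w : DataWord A D) :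
    permW τ (permW τ w) = w := by
  rw [permW_permW]
  have : τ.trans τ = Equiv.refl D := by ext x; exact h x
  rw [this, permW_refl]

theorem big_mem_forward [Infinite D] {f : Transduction A G D}
    (hperm : PermInvariant f) {Z : DataWord A D} {d c : D}
    (hmd : ¬ Memorable f d Z) (hmc : ¬ Memorable f c Z)
    (a : D) (M : DataWord A D) (h : Memorable f a (Z ++ M)) :
    Memorable f (Equiv.swap d c a) (Z ++ permW (Equiv.swap d c) M) := by
  obtain ⟨b, hb⟩ := exists_fresh
    (d :: c :: a :: Equiv.swap d c a :: (vals Z ++ vals M))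
  simp only [List.mem_cons, List.mem_append, not_or] at hb
  obtain ⟨hbd, hbc, hba, hbτa, hbZ, hbM⟩ := hb
  have hbZM : ¬ OccursIn b (Z ++ M) := by
    rw [occursIn_append]
    rintro (h2 | h2)
    · exact hbZ (occursIn_iff_mem_vals.1 h2)
    · exact hbM (occursIn_iff_mem_vals.1 h2)
  have hbM' : ¬ OccursIn b M := fun h2 => hbM (occursIn_iff_mem_vals.1 h2)
  have hbZM' : ¬ OccursIn b (Z ++ permW (Equiv.swap d c) M) := by
    rw [occursIn_append]
    rintro (h2 | h2)
    · exact hbZ (occursIn_iff_mem_vals.1 h2)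
    · exact not_occurs_permW_swap hbM' hbd hbc h2
  rw [memorable_iff_swap hperm hbZM] at h
  rw [memorable_iff_swap hperm hbZM']
  obtain ⟨v, hv⟩ := h
  refine ⟨permW (Equiv.swap d c) v, ?_⟩
  rw [permW_swap_comm hbd hbc, lf_ext_swap hperm hmd hmc,
    lf_ext_swap hperm hmd hmc, permFO_swap_comm hbd hbc]
  intro hcon
  exact hv (permFO_injective _ hcon)

theorem big_mem [Infinite D] {f : Transduction A G D} (hperm : PermInvariant f)
    {Z : DataWord A D} {d c : D}
    (hmd : ¬ Memorable f d Z) (hmc : ¬ Memorable f c Z)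
    (a : D) (M : DataWord A D) :
    Memorable f a (Z ++ M) ↔
      Memorable f (Equiv.swap d c a) (Z ++ permW (Equiv.swap d c) M) := by
  constructor
  · exact big_mem_forward hperm hmd hmc a M
  · intro h
    have h2 := big_mem_forward hperm hmd hmc (Equiv.swap d c a)
      (permW (Equiv.swap d c) M) h
    rwa [Equiv.swap_apply_self,
      permW_involutive _ (fun x => Equiv.swap_apply_self _ _ _)] at h2

theorem replaceD_permW_swap {v : DataWord A D} {a b d c : D}
    (hbd : b ≠ d) (hbc : b ≠ c) :
    replaceD (permW (Equiv.swap d c) v) (Equiv.swap d c a) b =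
      permW (Equiv.swap d c) (replaceD v a b) := by
  rw [replaceD_eq_valMap, replaceD_eq_valMap, permW_eq_valMap, permW_eq_valMap,
    valMap_valMap, valMap_valMap]
  apply valMap_congr
  intro x _
  simp only [Function.comp]
  by_cases hxa : x = a
  · rw [hxa, if_pos rfl, if_pos rfl, Equiv.swap_apply_of_ne_of_ne hbd hbc]
  · rw [if_neg (fun h2 => hxa ((Equiv.swap d c).injective h2)), if_neg hxa]

theorem big_vul_forward [Infinite D] {f : Transduction A G D}
    (hperm : PermInvariant f) {Z : DataWord A D} {d c : D}
    (hd : ¬ Influencing f d Z) (hc : ¬ Influencing f c Z)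
    (a : D) (M : DataWord A D) (h : Vulnerable f a (Z ++ M)) :
    Vulnerable f (Equiv.swap d c a) (Z ++ permW (Equiv.swap d c) M) := by
  rw [vulnerable_iff_fresh hperm [d, c]] at h
  obtain ⟨u', v, b, hbL, hbW, hba, hocc, hne⟩ := h
  simp only [List.mem_cons, List.not_mem_nil, or_false, not_or] at hbL
  obtain ⟨hbd, hbc⟩ := hbL
  have hbZ : ¬ OccursIn b Z := fun h2 =>
    hbW (occursIn_append.2 (Or.inl (occursIn_append.2 (Or.inl
      (occursIn_append.2 (Or.inl h2))))))
  have hbM : ¬ OccursIn b M := fun h2 =>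
    hbW (occursIn_append.2 (Or.inl (occursIn_append.2 (Or.inl
      (occursIn_append.2 (Or.inr h2))))))
  have hbu : ¬ OccursIn b u' := fun h2 =>
    hbW (occursIn_append.2 (Or.inl (occursIn_append.2 (Or.inr h2))))
  have hbv : ¬ OccursIn b v := fun h2 => hbW (occursIn_append.2 (Or.inr h2))
  refine ⟨permW (Equiv.swap d c) u', permW (Equiv.swap d c) v, b, ?_, ?_, ?_⟩
  · intro h2
    exact hocc (occursIn_permW.1 h2)
  · apply safeRepl_of_fresh
    rw [occursIn_append, occursIn_append]
    rintro ((h2 | h2) | h2)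
    · rw [occursIn_append] at h2
      rcases h2 with h2 | h2
      · exact hbZ h2
      · exact not_occurs_permW_swap hbM hbd hbc h2
    · exact not_occurs_permW_swap hbu hbd hbc h2
    · exact not_occurs_permW_swap hbv hbd hbc h2
  · rw [replaceD_permW_swap hbd hbc, List.append_assoc, ← permW_append]
    have hne2 : rightFac f (Z ++ (M ++ u')) (replaceD v a b) ≠
        rightFac f (Z ++ (M ++ u')) v := by
      rw [← List.append_assoc]
      exact hne
    intro hcon
    exact hne2 ((rf_core_swap hperm hd hc (M ++ u') (replaceD v a b) v).2 hcon)

theorem big_vul [Infinite D] {f : Transduction A G D} (hperm : PermInvariant f)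
    {Z : DataWord A D} {d c : D}
    (hd : ¬ Influencing f d Z) (hc : ¬ Influencing f c Z)
    (a : D) (M : DataWord A D) :
    Vulnerable f a (Z ++ M) ↔
      Vulnerable f (Equiv.swap d c a) (Z ++ permW (Equiv.swap d c) M) := by
  constructor
  · exact big_vul_forward hperm hd hc a M
  · intro h
    have h2 := big_vul_forward hperm hd hc (Equiv.swap d c a)
      (permW (Equiv.swap d c) M) h
    rwa [Equiv.swap_apply_self,
      permW_involutive _ (fun x => Equiv.swap_apply_self _ _ _)] at h2

/-! ### Transfer along the equivalence `≡_f` -/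

theorem t_mem [Infinite D] {f : Transduction A G D} (hperm : PermInvariant f)
    {u1 W2 : DataWord A D}
    (hLF : ∀ v, foShift ((u1.length : ℤ) - (W2.length : ℤ)) (leftFac f W2 v) =
      leftFac f u1 v) (a : D) (M : DataWord A D) :
    Memorable f a (u1 ++ M) ↔ Memorable f a (W2 ++ M) := by
  obtain ⟨b, hb⟩ := exists_fresh (a :: (vals u1 ++ vals W2 ++ vals M))
  simp only [List.mem_cons, List.mem_append, not_or] at hb
  obtain ⟨hba, ⟨hbu1, hbW2⟩, hbM⟩ := hb
  have hb1 : ¬ OccursIn b (u1 ++ M) := by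
    rw [occursIn_append]
    rintro (h | h)
    · exact hbu1 (occursIn_iff_mem_vals.1 h)
    · exact hbM (occursIn_iff_mem_vals.1 h)
  have hb2 : ¬ OccursIn b (W2 ++ M) := by
    rw [occursIn_append]
    rintro (h | h)
    · exact hbW2 (occursIn_iff_mem_vals.1 h)
    · exact hbM (occursIn_iff_mem_vals.1 h)
  rw [memorable_iff_swap hperm hb1, memorable_iff_swap hperm hb2]
  have hT := leftFac_transfer hLF M
  have hcond : ∀ v : DataWord A D,
      (permFO (Equiv.swap a b) (leftFac f (u1 ++ M) (permW (Equiv.swap a b) v)) =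
        leftFac f (u1 ++ M) v) ↔
      (permFO (Equiv.swap a b) (leftFac f (W2 ++ M) (permW (Equiv.swap a b) v)) =
        leftFac f (W2 ++ M) v) := by
    intro v
    rw [hT v, hT (permW (Equiv.swap a b) v), ← foShift_permFO]
    exact ⟨fun h2 => foShift_injective _ h2, fun h2 => by rw [h2]⟩
  constructor
  · rintro ⟨v, hv⟩
    exact ⟨v, fun h2 => hv ((hcond v).2 h2)⟩
  · rintro ⟨v, hv⟩
    exact ⟨v, fun h2 => hv ((hcond v).1 h2)⟩

theorem t_vul [Infinite D] {f : Transduction A G D} (hperm : PermInvariant f)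
    {u1 W2 : DataWord A D}
    (hRF : ∀ u v1 v2, (rightFac f (u1 ++ u) v1 = rightFac f (u1 ++ u) v2) ↔
        (rightFac f (W2 ++ u) v1 = rightFac f (W2 ++ u) v2))
    (a : D) (M : DataWord A D) :
    Vulnerable f a (u1 ++ M) ↔ Vulnerable f a (W2 ++ M) := by
  constructor
  · intro h
    rw [vulnerable_iff_fresh hperm (vals W2)] at h
    obtain ⟨u', v, b, hbL, hbW, hba, hocc, hne⟩ := h
    have hbM : ¬ OccursIn b M := fun h2 =>
      hbW (occursIn_append.2 (Or.inl (occursIn_append.2 (Or.inl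
        (occursIn_append.2 (Or.inr h2))))))
    have hbu : ¬ OccursIn b u' := fun h2 =>
      hbW (occursIn_append.2 (Or.inl (occursIn_append.2 (Or.inr h2))))
    have hbv : ¬ OccursIn b v := fun h2 => hbW (occursIn_append.2 (Or.inr h2))
    refine ⟨u', v, b, hocc, ?_, ?_⟩
    · apply safeRepl_of_fresh
      rw [occursIn_append, occursIn_append, occursIn_append]
      rintro (((h2 | h2) | h2) | h2)
      · exact hbL (occursIn_iff_mem_vals.1 h2)
      · exact hbM h2
      · exact hbu h2
      · exact hbv h2
    · have hne2 : rightFac f (u1 ++ (M ++ u')) (replaceD v a b) ≠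
          rightFac f (u1 ++ (M ++ u')) v := by
        rw [← List.append_assoc]
        exact hne
      rw [List.append_assoc]
      intro hcon
      exact hne2 ((hRF (M ++ u') _ _).2 hcon)
  · intro h
    rw [vulnerable_iff_fresh hperm (vals u1)] at h
    obtain ⟨u', v, b, hbL, hbW, hba, hocc, hne⟩ := h
    have hbM : ¬ OccursIn b M := fun h2 =>
      hbW (occursIn_append.2 (Or.inl (occursIn_append.2 (Or.inl
        (occursIn_append.2 (Or.inr h2))))))
    have hbu : ¬ OccursIn b u' := fun h2 =>
      hbW (occursIn_append.2 (Or.inl (occursIn_append.2 (Or.inr h2))))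
    have hbv : ¬ OccursIn b v := fun h2 => hbW (occursIn_append.2 (Or.inr h2))
    refine ⟨u', v, b, hocc, ?_, ?_⟩
    · apply safeRepl_of_fresh
      rw [occursIn_append, occursIn_append, occursIn_append]
      rintro (((h2 | h2) | h2) | h2)
      · exact hbL (occursIn_iff_mem_vals.1 h2)
      · exact hbM h2
      · exact hbu h2
      · exact hbv h2
    · have hne2 : rightFac f (W2 ++ (M ++ u')) (replaceD v a b) ≠
          rightFac f (W2 ++ (M ++ u')) v := by
        rw [← List.append_assoc]
        exact hne
      rw [List.append_assoc]
      intro hcon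
      exact hne2 ((hRF (M ++ u') _ _).1 hcon)

end SSRTAux

open SSRTAux

/-- Lemma 9, point 1. -/
theorem rightCongruences_iflPreserved
    {D A G : Type} [DecidableEq D] [Infinite D] [DecidableEq G]
    [Fintype A] [Fintype G]
    (f : Transduction A G D)
    (hperm : PermInvariant f) (hpeek : NoDataPeeking f)
    (u1 u2 : DataWord A D) (hequiv : FEquiv f u1 u2)
    (m : ℕ) (d1 d2 : ℕ → D)
    (hifl1 : IsIflSeq f u1 ((List.range m).map fun k => d1 (k + 1)))
    (hifl2 : IsIflSeq f u2 ((List.range m).map fun k => d2 (k + 1)))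
    (hd10 : ¬ Influencing f (d1 0) u1)
    (hd20 : ¬ Influencing f (d2 0) u2)
    (σ : A) :
    ∀ i j : ℕ, i ≤ m → j ≤ m →
      ((Memorable f (d1 i) (u1 ++ [(σ, d1 j)]) ↔
          Memorable f (d2 i) (u2 ++ [(σ, d2 j)])) ∧
       (Vulnerable f (d1 i) (u1 ++ [(σ, d1 j)]) ↔
          Vulnerable f (d2 i) (u2 ++ [(σ, d2 j)]))) := by
  classical
  obtain ⟨π, hi, hii, hiii⟩ := hequiv
  intro i j him hjm
  have hiW : ∀ v, foShift ((u1.length : ℤ) - (((permW π u2).length : ℕ) : ℤ))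
      (leftFac f (permW π u2) v) = leftFac f u1 v := by
    intro v
    rw [length_permW]
    exact hi v
  obtain ⟨al1, hal1, hal1fst⟩ := exists_aifl hifl1
  have hW2ifl : IsIflSeq f (permW π u2) ((List.range m).map fun k => d1 (k + 1)) := by
    have h2 := ((hii al1).2 hal1).1
    rwa [hal1fst] at h2
  have hW2ifl2 : IsIflSeq f (permW π u2)
      (((List.range m).map fun k => d2 (k + 1)).map π) :=
    isIflSeq_permW_of hperm π hifl2
  have hlists := isIflSeq_unique hW2ifl2 hW2ifl
  have hπd : ∀ k, k < m → π (d2 (k + 1)) = d1 (k + 1) := by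
    intro k hk
    have h2 := congrArg (fun l : List D => l[k]?) hlists
    simp only [List.getElem?_map, List.getElem?_range hk, Option.map_some] at h2
    exact Option.some_injective _ h2
  have hmem_iff : ∀ x, Influencing f x (permW π u2) ↔
      x ∈ ((List.range m).map fun k => d1 (k + 1)) :=
    fun x => (hW2ifl.1 x).symm
  have hd10W2 : ¬ Influencing f (d1 0) (permW π u2) := by
    intro h
    exact hd10 ((hifl1.1 _).1 ((hmem_iff _).1 h))
  have he0W2 : ¬ Influencing f (π (d2 0)) (permW π u2) := by
    intro h
    exact hd20 ((influencing_permW hperm π _ u2).1 h)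
  have hτd : ∀ k, k ≤ m → Equiv.swap (d1 0) (π (d2 0)) (d1 k) = π (d2 k) := by
    intro k hk
    rcases Nat.eq_zero_or_pos k with rfl | hpos
    · exact Equiv.swap_apply_left _ _
    · have hk' : k - 1 < m := by omega
      have hmem : d1 k ∈ (List.range m).map fun k => d1 (k + 1) :=
        List.mem_map.2 ⟨k - 1, List.mem_range.2 hk', by congr 1; omega⟩
      have hinfW2 : Influencing f (d1 k) (permW π u2) := (hmem_iff _).2 hmem
      have hinfu1 : Influencing f (d1 k) u1 := (hifl1.1 _).1 hmem
      have hne1 : d1 k ≠ d1 0 := fun h2 => hd10 (h2 ▸ hinfu1)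
      have hne2 : d1 k ≠ π (d2 0) := fun h2 => he0W2 (h2 ▸ hinfW2)
      rw [Equiv.swap_apply_of_ne_of_ne hne1 hne2]
      have h3 := hπd (k - 1) hk'
      rw [show k - 1 + 1 = k by omega] at h3
      exact h3.symm
  have hmd : ¬ Memorable f (d1 0) (permW π u2) := fun h => hd10W2 (Or.inl h)
  have hmc : ¬ Memorable f (π (d2 0)) (permW π u2) := fun h => he0W2 (Or.inl h)
  have hsingle : permW (Equiv.swap (d1 0) (π (d2 0))) [(σ, d1 j)] =
      [(σ, π (d2 j))] := by
    show [(σ, Equiv.swap (d1 0) (π (d2 0)) (d1 j))] = [(σ, π (d2 j))]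
    rw [hτd j hjm]
  constructor
  · have hRHS : Memorable f (d2 i) (u2 ++ [(σ, d2 j)]) ↔
        Memorable f (π (d2 i)) (permW π u2 ++ [(σ, π (d2 j))]) := by
      rw [← memorable_permW hperm π, permW_append]
      exact Iff.rfl
    rw [hRHS, t_mem hperm hiW (d1 i) [(σ, d1 j)],
      big_mem hperm hmd hmc (d1 i) [(σ, d1 j)], hτd i him, hsingle]
  · have hRHS : Vulnerable f (d2 i) (u2 ++ [(σ, d2 j)]) ↔
        Vulnerable f (π (d2 i)) (permW π u2 ++ [(σ, π (d2 j))]) := by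
      rw [← vulnerable_permW hperm π, permW_append]
      exact Iff.rfl
    rw [hRHS, t_vul hperm hiii (d1 i) [(σ, d1 j)],
      big_vul hperm hd10W2 he0W2 (d1 i) [(σ, d1 j)], hτd i him, hsingle]
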